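/- arXiv:2307.07241 — 6 statements merged into one kernel-verified Lean document; each statement's English description precedes it below -/
import Mathlib

section
/- There exist universal constants c₁ > 0 and c₂ > 0 with the following property: for every integer d ≥ 2, every real m > 1, every offspring distribution μ on {0,1,…,d} with mean m, every n ∈ ℕ and every real x ≥ 0, the normalized Galton–Watson martingale satisfies P(W_n ≥ x) ≤ c₁ · exp(−c₂ · ((m−1)/m) · (x/d)). -/
/-!
Let `Λ(s) = E e^{sξ}`. Since `ξ ≤ d`, for `0 ≤ s ≤ 1/d` one has `e^{sk} ≤ 1 + (s + d s²) k` on the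
support, hence `Λ(s) ≤ exp (m (s + d s²))`. As `Z_k` depends only on the generations before `k`,
which are independent of generation `k`, `E e^{s Z_{k+1}} = E Λ(s)^{Z_k} ≤ E e^{φ(s) Z_k}` with
`φ(s) = m (s + d s²)`. With `t = (m - 1)/(4dm)`, the scales `a_k = t (1 + m⁻ᵏ) m⁻ᵏ` satisfy
`φ(a_{k+1}) ≤ a_k`, so `E e^{a_n Z_n} ≤ e^{a_0} = e^{2t} ≤ e`. Since `a_n mⁿ ≥ t`, Chernoff's bound
at level `x mⁿ` gives `P(W_n ≥ x) ≤ e · e^{-tx}`, and `tx = ((m - 1)/m)(x/d)/4`.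
-/

open MeasureTheory ProbabilityTheory Finset Real
open scoped ENNReal

lemma exp_mul_le_one_add_mul_of_le {d k : ℕ} (hk : k ≤ d) {s : ℝ} (hs : 0 ≤ s)
    (hsd : s * d ≤ 1) : exp (s * k) ≤ 1 + (s + d * s ^ 2) * k := by
  have hkd : (k : ℝ) ≤ d := by exact_mod_cast hk
  have hsk0 : 0 ≤ s * k := by positivity
  have hsk1 : s * k ≤ 1 := (mul_le_mul_of_nonneg_left hkd hs).trans hsd
  have hexp := (abs_le.mp (abs_exp_sub_one_sub_id_le (abs_le.mpr ⟨by linarith, hsk1⟩))).2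
  have hsq : (s * k) ^ 2 ≤ d * s ^ 2 * k := by
    nlinarith [mul_nonneg (mul_nonneg (sq_nonneg s) (Nat.cast_nonneg k)) (sub_nonneg.mpr hkd)]
  nlinarith

lemma lintegral_exp_mul_le_of_support_le {μ : Measure ℕ} [IsProbabilityMeasure μ] {d : ℕ}
    (hsupp : ∀ k, d < k → μ {k} = 0) {m : ℝ} (hmean : ∑' k : ℕ, (k : ℝ) * (μ {k}).toReal = m)
    {s : ℝ} (hs : 0 ≤ s) (hsd : s * d ≤ 1) :
    ∫⁻ k, ENNReal.ofReal (exp (s * k)) ∂μ ≤ ENNReal.ofReal (exp (m * (s + d * s ^ 2))) := by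
  have hae : ∀ᵐ k ∂μ, k ≤ d := by
    rw [ae_iff, measure_null_iff_singleton (Set.to_countable _)]
    exact fun k hk => hsupp k (not_le.mp hk)
  have hint : Integrable (fun k : ℕ => (k : ℝ)) μ :=
    Integrable.of_bound (by fun_prop) d (hae.mono fun k hk => by simpa using hk)
  have hmean' : ∫ k, (k : ℝ) ∂μ = m := by
    rw [integral_countable hint, ← hmean]
    exact tsum_congr fun k => by rw [smul_eq_mul, mul_comm, measureReal_def]
  set c := s + d * s ^ 2
  have hc : 0 ≤ c := by positivity
  calc ∫⁻ k, ENNReal.ofReal (exp (s * k)) ∂μ ≤ ∫⁻ k, ENNReal.ofReal (1 + c * k) ∂μ :=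
        lintegral_mono_ae <| hae.mono fun k hk =>
          ENNReal.ofReal_le_ofReal (exp_mul_le_one_add_mul_of_le hk hs hsd)
    _ = ENNReal.ofReal (∫ k, (1 + c * k) ∂μ) :=
        (ofReal_integral_eq_lintegral_ofReal ((integrable_const 1).add (hint.const_mul c))
          (ae_of_all _ fun k => add_nonneg zero_le_one (mul_nonneg hc k.cast_nonneg))).symm
    _ = ENNReal.ofReal (m * c + 1) := by
        rw [integral_add (integrable_const 1) (hint.const_mul c), integral_const,
          integral_const_mul, hmean']
        simp [mul_comm, add_comm]
    _ ≤ ENNReal.ofReal (exp (m * c)) := ENNReal.ofReal_le_ofReal (add_one_le_exp _)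

section RandomProduct

variable {Ω : Type*} {mΩ : MeasurableSpace Ω} {P : Measure Ω} {m₁ m₂ : MeasurableSpace Ω}
  {N : Ω → ℕ}

theorem lintegral_comp_eq_tsum_of_indep (h₁ : m₁ ≤ mΩ) (h₂ : m₂ ≤ mΩ) (hind : Indep m₁ m₂ P)
    (hN : Measurable[m₁] N) {F : ℕ → Ω → ℝ≥0∞} (hF : ∀ z, Measurable[m₂] (F z)) :
    ∫⁻ ω, F (N ω) ω ∂P = ∑' z, P (N ⁻¹' {z}) * ∫⁻ ω, F z ω ∂P := by
  have hlevel (z : ℕ) : Measurable[m₁] ((N ⁻¹' {z}).indicator (1 : Ω → ℝ≥0∞)) :=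
    Measurable.indicator (m := m₁) (@measurable_one _ _ _ m₁ _) (hN (measurableSet_singleton z))
  have hsplit (ω : Ω) : F (N ω) ω = ∑' z, (N ⁻¹' {z}).indicator 1 ω * F z ω := by
    rw [tsum_eq_single (N ω) fun z hz => by simp [Ne.symm hz]]
    simp
  simp_rw [hsplit]
  rw [lintegral_tsum (f := fun z ω => (N ⁻¹' {z}).indicator 1 ω * F z ω) fun z =>
    (((hlevel z).mono h₁ le_rfl).mul ((hF z).mono h₂ le_rfl)).aemeasurable]
  refine tsum_congr fun z => ?_
  rw [lintegral_mul_eq_lintegral_mul_lintegral_of_independent_measurableSpace h₁ h₂ hind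
    (hlevel z) (hF z), lintegral_indicator_one (h₁ _ (hN (measurableSet_singleton z)))]

theorem lintegral_prod_range_eq_lintegral_pow [IsProbabilityMeasure P] (h₁ : m₁ ≤ mΩ)
    (h₂ : m₂ ≤ mΩ) (hind : Indep m₁ m₂ P) (hN : Measurable[m₁] N) {Y : ℕ → Ω → ℝ≥0∞}
    (hY : ∀ i, Measurable[m₂] (Y i)) (hYind : iIndepFun Y P) {Λ : ℝ≥0∞}
    (hΛ : ∀ i, ∫⁻ ω, Y i ω ∂P = Λ) :
    ∫⁻ ω, ∏ i ∈ range (N ω), Y i ω ∂P = ∫⁻ ω, Λ ^ N ω ∂P := by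
  rw [lintegral_comp_eq_tsum_of_indep h₁ h₂ hind hN (F := fun z ω => ∏ i ∈ range z, Y i ω)
      fun z => Finset.measurable_prod _ fun i _ => hY i,
    lintegral_comp_eq_tsum_of_indep h₁ h₂ hind hN (F := fun z _ => Λ ^ z)
      fun _ => measurable_const]
  refine tsum_congr fun z => ?_
  rw [lintegral_prod_eq_prod_lintegral_of_indepFun _ _ hYind fun i => (hY i).mono h₂ le_rfl]
  simp [hΛ]

end RandomProduct

theorem measure_ge_le_exp_mul_lintegral_exp {Ω : Type*} {mΩ : MeasurableSpace Ω}
    {P : Measure Ω} {Y : Ω → ℝ} (hY : Measurable Y) {s : ℝ} (hs : 0 ≤ s) (y : ℝ) :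
    P {ω | y ≤ Y ω} ≤ ENNReal.ofReal (exp (-s * y)) * ∫⁻ ω, ENNReal.ofReal (exp (s * Y ω)) ∂P :=
  calc P {ω | y ≤ Y ω}
      ≤ P {ω | ENNReal.ofReal (exp (s * y)) ≤ ENNReal.ofReal (exp (s * Y ω))} :=
        measure_mono fun _ h =>
          ENNReal.ofReal_le_ofReal (exp_le_exp.mpr (mul_le_mul_of_nonneg_left h hs))
    _ ≤ (∫⁻ ω, ENNReal.ofReal (exp (s * Y ω)) ∂P) / ENNReal.ofReal (exp (s * y)) :=
        meas_ge_le_lintegral_div (by fun_prop) (by simp [exp_pos]) ENNReal.ofReal_ne_top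
    _ = _ := by
        rw [ENNReal.div_eq_inv_mul, ← ENNReal.ofReal_inv_of_pos (exp_pos _), ← exp_neg, neg_mul]

lemma lintegral_exp_mul_natCast_mono {Ω : Type*} {mΩ : MeasurableSpace Ω} {P : Measure Ω}
    (N : Ω → ℕ) {s s' : ℝ} (h : s ≤ s') :
    ∫⁻ ω, ENNReal.ofReal (exp (s * N ω)) ∂P ≤ ∫⁻ ω, ENNReal.ofReal (exp (s' * N ω)) ∂P :=
  lintegral_mono fun _ => ENNReal.ofReal_le_ofReal
    (exp_le_exp.mpr (mul_le_mul_of_nonneg_right h (Nat.cast_nonneg _)))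

noncomputable def chernoffScale (t m : ℝ) (k : ℕ) : ℝ := t * (1 + (m ^ k)⁻¹) * (m ^ k)⁻¹

section ChernoffScale

variable {t m : ℝ}

lemma chernoffScale_zero : chernoffScale t m 0 = 2 * t := by
  norm_num [chernoffScale]; ring

lemma chernoffScale_nonneg (ht : 0 ≤ t) (hm : 0 < m) (k : ℕ) : 0 ≤ chernoffScale t m k := by
  unfold chernoffScale; positivity

lemma chernoffScale_le (ht : 0 ≤ t) (hm : 1 ≤ m) (k : ℕ) : chernoffScale t m k ≤ 2 * t := by
  have hu0 : 0 ≤ (m ^ k)⁻¹ := by positivity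
  have hu1 : (m ^ k)⁻¹ ≤ 1 := inv_le_one_of_one_le₀ (one_le_pow₀ hm)
  unfold chernoffScale
  nlinarith [mul_nonneg ht hu0]

lemma le_chernoffScale_mul_pow (ht : 0 ≤ t) (hm : 0 < m) (k : ℕ) :
    t ≤ chernoffScale t m k * m ^ k := by
  have hmk : m ^ k ≠ 0 := by positivity
  have : chernoffScale t m k * m ^ k = t + t * (m ^ k)⁻¹ := by
    unfold chernoffScale; field_simp
  rw [this]
  have : 0 ≤ t * (m ^ k)⁻¹ := by positivity
  linarith

lemma chernoffScale_succ {d : ℝ} (hm : 1 < m) (hd : 0 ≤ d) (ht0 : 0 ≤ t)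
    (ht : 4 * d * m * t ≤ m - 1) (k : ℕ) :
    m * (chernoffScale t m (k + 1) + d * chernoffScale t m (k + 1) ^ 2)
      ≤ chernoffScale t m k := by
  have hmu : (m ^ k)⁻¹ = m * (m ^ (k + 1))⁻¹ := by
    rw [pow_succ, mul_inv, ← mul_assoc, mul_comm m, mul_assoc, mul_inv_cancel₀ (by positivity),
      mul_one]
  set u := (m ^ (k + 1))⁻¹
  have hu0 : 0 ≤ u := by positivity
  have hu1 : u ≤ 1 := inv_le_one_of_one_le₀ (one_le_pow₀ hm.le)
  have hd : d * t * (1 + u) ^ 2 ≤ m - 1 :=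
    calc d * t * (1 + u) ^ 2 ≤ d * t * 4 := by gcongr; nlinarith
      _ ≤ m - 1 := by nlinarith [mul_nonneg hd ht0]
  have key : (1 + u) * (1 + d * t * (1 + u) * u) ≤ 1 + m * u := by
    nlinarith [mul_le_mul_of_nonneg_right hd hu0]
  calc m * (chernoffScale t m (k + 1) + d * chernoffScale t m (k + 1) ^ 2)
      = m * t * u * ((1 + u) * (1 + d * t * (1 + u) * u)) := by unfold chernoffScale; ring
    _ ≤ m * t * u * (1 + m * u) := by gcongr
    _ = chernoffScale t m k := by unfold chernoffScale; rw [hmu]; ring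

end ChernoffScale

section GaltonWatson

variable {Ω : Type*} {mΩ : MeasurableSpace Ω} {P : Measure Ω} {ξ : ℕ → ℕ → Ω → ℕ}
  {Z : ℕ → Ω → ℕ}

abbrev offspringSigma (ξ : ℕ → ℕ → Ω → ℕ) (S : Set (ℕ × ℕ)) : MeasurableSpace Ω :=
  ⨆ p ∈ S, MeasurableSpace.comap (ξ p.1 p.2) inferInstance

lemma measurable_offspringSigma {S : Set (ℕ × ℕ)} {k i : ℕ} (h : (k, i) ∈ S) :
    Measurable[offspringSigma ξ S] (ξ k i) :=
  Measurable.of_comap_le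
    (le_biSup (fun p : ℕ × ℕ => MeasurableSpace.comap (ξ p.1 p.2) inferInstance) h)

lemma offspringSigma_mono {S T : Set (ℕ × ℕ)} (h : S ⊆ T) :
    offspringSigma ξ S ≤ offspringSigma ξ T :=
  biSup_mono h

lemma offspringSigma_le (hξ : ∀ k i, Measurable (ξ k i)) (S : Set (ℕ × ℕ)) :
    offspringSigma ξ S ≤ mΩ :=
  iSup₂_le fun p _ => (hξ p.1 p.2).comap_le

lemma indep_offspringSigma (hξ : ∀ k i, Measurable (ξ k i))
    (hind : iIndepFun (fun p : ℕ × ℕ => ξ p.1 p.2) P) {S T : Set (ℕ × ℕ)}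
    (h : Disjoint S T) : Indep (offspringSigma ξ S) (offspringSigma ξ T) P :=
  indep_iSup_of_disjoint (m := fun p : ℕ × ℕ => MeasurableSpace.comap (ξ p.1 p.2) inferInstance)
    (fun p => (hξ p.1 p.2).comap_le) hind.iIndep h

lemma measurable_offspringSigma_Z (hZ0 : ∀ ω, Z 0 ω = 1)
    (hZrec : ∀ n ω, Z (n + 1) ω = ∑ i ∈ range (Z n ω), ξ n i ω) (k : ℕ) :
    Measurable[offspringSigma ξ {p | p.1 < k}] (Z k) := by
  induction k with
  | zero => simp_rw [show Z 0 = fun _ => 1 from funext hZ0]; exact measurable_const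
  | succ k ih =>
    let mk := offspringSigma ξ {p : ℕ × ℕ | p.1 < k + 1}
    have hZk : Measurable[mk] (Z k) :=
      ih.mono (offspringSigma_mono fun p (hp : p.1 < k) => by simp; omega) le_rfl
    have hsum : Measurable[@Prod.instMeasurableSpace ℕ Ω _ mk]
        fun q : ℕ × Ω => ∑ i ∈ range q.1, ξ k i q.2 :=
      measurable_from_prod_countable_right fun z =>
        (Finset.measurable_sum (range z) fun i _ => measurable_offspringSigma
          (show (k, i) ∈ {p : ℕ × ℕ | p.1 < k + 1} from k.lt_succ_self) :
          Measurable[mk] fun ω => ∑ i ∈ range z, ξ k i ω)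
    rw [show Z (k + 1) = fun ω => ∑ i ∈ range (Z k ω), ξ k i ω from funext (hZrec k)]
    exact hsum.comp (hZk.prodMk measurable_id)

variable {μ : Measure ℕ}

structure IsGaltonWatson (P : Measure Ω) (μ : Measure ℕ) (ξ : ℕ → ℕ → Ω → ℕ)
    (Z : ℕ → Ω → ℕ) : Prop where
  measurable : ∀ k i, Measurable (ξ k i)
  map_eq : ∀ k i, P.map (ξ k i) = μ
  indep : iIndepFun (fun p : ℕ × ℕ => ξ p.1 p.2) P
  zero : ∀ ω, Z 0 ω = 1
  succ : ∀ n ω, Z (n + 1) ω = ∑ i ∈ range (Z n ω), ξ n i ω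

variable [IsProbabilityMeasure P]

theorem IsGaltonWatson.lintegral_exp_mul_Z_succ (h : IsGaltonWatson P μ ξ Z) (k : ℕ) (s : ℝ) :
    ∫⁻ ω, ENNReal.ofReal (exp (s * Z (k + 1) ω)) ∂P
      = ∫⁻ ω, (∫⁻ j, ENNReal.ofReal (exp (s * j)) ∂μ) ^ Z k ω ∂P := by
  have hprod (ω : Ω) : ENNReal.ofReal (exp (s * Z (k + 1) ω))
      = ∏ i ∈ range (Z k ω), ENNReal.ofReal (exp (s * ξ k i ω)) := by
    rw [h.succ, Nat.cast_sum, mul_sum, exp_sum,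
      ENNReal.ofReal_prod_of_nonneg fun i _ => (exp_pos _).le]
  have hexp : Measurable fun j : ℕ => ENNReal.ofReal (exp (s * j)) := measurable_from_top
  simp_rw [hprod]
  refine lintegral_prod_range_eq_lintegral_pow (offspringSigma_le h.measurable _)
    (offspringSigma_le h.measurable _) (indep_offspringSigma h.measurable h.indep
      (T := {p | p.1 = k}) ?_) (measurable_offspringSigma_Z h.zero h.succ k)
    (fun i => hexp.comp (measurable_offspringSigma rfl))
    ((h.indep.precomp (Prod.mk_right_injective k)).comp _ fun _ => hexp) fun i => ?_
  · exact Set.disjoint_left.mpr fun p (hlt : p.1 < k) (heq : p.1 = k) => hlt.ne heq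
  · rw [← h.map_eq k i, lintegral_map hexp (h.measurable k i)]
    rfl

theorem IsGaltonWatson.lintegral_exp_mul_Z_succ_le (h : IsGaltonWatson P μ ξ Z) {d : ℕ}
    (hsupp : ∀ k, d < k → μ {k} = 0) {m : ℝ} (hmean : ∑' k : ℕ, (k : ℝ) * (μ {k}).toReal = m)
    (k : ℕ) {s : ℝ} (hs : 0 ≤ s) (hsd : s * d ≤ 1) :
    ∫⁻ ω, ENNReal.ofReal (exp (s * Z (k + 1) ω)) ∂P
      ≤ ∫⁻ ω, ENNReal.ofReal (exp (m * (s + d * s ^ 2) * Z k ω)) ∂P := by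
  have : IsProbabilityMeasure μ :=
    h.map_eq 0 0 ▸ Measure.isProbabilityMeasure_map (h.measurable 0 0).aemeasurable
  rw [h.lintegral_exp_mul_Z_succ]
  refine lintegral_mono fun ω => ?_
  calc (∫⁻ j, ENNReal.ofReal (exp (s * j)) ∂μ) ^ Z k ω
      ≤ ENNReal.ofReal (exp (m * (s + d * s ^ 2))) ^ Z k ω :=
        pow_le_pow_left' (lintegral_exp_mul_le_of_support_le hsupp hmean hs hsd) _
    _ = ENNReal.ofReal (exp (m * (s + d * s ^ 2) * Z k ω)) := by
        rw [← ENNReal.ofReal_pow (exp_pos _).le, ← exp_nat_mul, mul_comm]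

theorem IsGaltonWatson.lintegral_exp_chernoffScale_mul_Z_le (h : IsGaltonWatson P μ ξ Z)
    {d : ℕ} (hsupp : ∀ k, d < k → μ {k} = 0) {m : ℝ} (hm : 1 < m)
    (hmean : ∑' k : ℕ, (k : ℝ) * (μ {k}).toReal = m)
    {t : ℝ} (ht0 : 0 ≤ t) (ht : 4 * d * m * t ≤ m - 1) (n : ℕ) :
    ∫⁻ ω, ENNReal.ofReal (exp (chernoffScale t m n * Z n ω)) ∂P
      ≤ ENNReal.ofReal (exp (2 * t)) := by
  induction n with
  | zero => simp [h.zero, chernoffScale_zero]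
  | succ k ih =>
    have hsd : chernoffScale t m (k + 1) * d ≤ 1 := by
      have h4 : 4 * d * t ≤ 1 := by nlinarith
      nlinarith [chernoffScale_le ht0 hm.le (k + 1), Nat.cast_nonneg (α := ℝ) d]
    calc ∫⁻ ω, ENNReal.ofReal (exp (chernoffScale t m (k + 1) * Z (k + 1) ω)) ∂P
        ≤ ∫⁻ ω, ENNReal.ofReal (exp (m * (chernoffScale t m (k + 1)
            + d * chernoffScale t m (k + 1) ^ 2) * Z k ω)) ∂P :=
          h.lintegral_exp_mul_Z_succ_le hsupp hmean k
            (chernoffScale_nonneg ht0 (by linarith) _) hsd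
      _ ≤ ∫⁻ ω, ENNReal.ofReal (exp (chernoffScale t m k * Z k ω)) ∂P :=
          lintegral_exp_mul_natCast_mono _ (chernoffScale_succ hm d.cast_nonneg ht0 ht k)
      _ ≤ _ := ih

end GaltonWatson

/-- There exist universal constants c₁ > 0 and c₂ > 0 such that for every integer d ≥ 2,
every real m > 1, every offspring distribution μ on {0,…,d} with mean m, every n ∈ ℕ and
every real x ≥ 0, the normalized Galton–Watson martingale satisfies
P(W_n ≥ x) ≤ c₁ · exp(−c₂ · ((m−1)/m) · (x/d)). -/
theorem gw_tail_Wn_universal :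
    ∃ c₁ > (0 : ℝ), ∃ c₂ > (0 : ℝ),
    ∀ (Ω : Type) (_ : MeasurableSpace Ω) (P : MeasureTheory.Measure Ω),
    MeasureTheory.IsProbabilityMeasure P →
    ∀ (d : ℕ), 2 ≤ d → ∀ (m : ℝ), 1 < m →
    ∀ (μ : MeasureTheory.Measure ℕ), MeasureTheory.IsProbabilityMeasure μ →
    (∀ k : ℕ, d < k → μ {k} = 0) →
    (∑' k : ℕ, (k : ℝ) * (μ {k}).toReal = m) →
    ∀ (ξ : ℕ → ℕ → Ω → ℕ),
    (∀ n i, Measurable (ξ n i)) →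
    (∀ n i, MeasureTheory.Measure.map (ξ n i) P = μ) →
    ProbabilityTheory.iIndepFun
      (fun p : ℕ × ℕ => ξ p.1 p.2) P →
    ∀ (Z : ℕ → Ω → ℕ), (∀ ω, Z 0 ω = 1) →
    (∀ n ω, Z (n + 1) ω = ∑ i ∈ Finset.range (Z n ω), ξ n i ω) →
    ∀ (W : ℕ → Ω → ℝ), (∀ n ω, W n ω = (Z n ω : ℝ) / m ^ n) →
    ∀ (n : ℕ) (x : ℝ), 0 ≤ x →
    P {ω | x ≤ W n ω} ≤
      ENNReal.ofReal (c₁ * Real.exp (-c₂ * ((m - 1) / m) * (x / d))) := by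
  refine ⟨exp 1, exp_pos 1, 1 / 4, by norm_num, ?_⟩
  intro Ω _ P _ d hd m hm μ _ hsupp hmean ξ hξ hlaw hind Z hZ0 hZrec W hW n x hx
  have hGW : IsGaltonWatson P μ ξ Z := ⟨hξ, hlaw, hind, hZ0, hZrec⟩
  have hd1 : (1 : ℝ) ≤ d := by exact_mod_cast (by omega : 1 ≤ d)
  have hm0 : 0 < m := by linarith
  set t := (m - 1) / (4 * d * m)
  have ht0 : 0 ≤ t := div_nonneg (by linarith) (by positivity)
  have ht : 4 * d * m * t = m - 1 := mul_div_cancel₀ _ (by positivity)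
  have htx : -(1 / 4) * ((m - 1) / m) * (x / d) = -(t * x) := by
    rw [← ht]; field_simp
  have hZn : Measurable (Z n) :=
    (measurable_offspringSigma_Z hZ0 hZrec n).mono (offspringSigma_le hξ _) le_rfl
  have hlevel : {ω | x ≤ W n ω} = {ω | x * m ^ n ≤ (Z n ω : ℝ)} := by
    ext ω; simp [hW, le_div_iff₀ (pow_pos hm0 n)]
  set a := chernoffScale t m n
  have ha : t ≤ a * m ^ n := le_chernoffScale_mul_pow ht0 hm0 n
  calc P {ω | x ≤ W n ω}
      ≤ ENNReal.ofReal (exp (-a * (x * m ^ n))) * ∫⁻ ω, ENNReal.ofReal (exp (a * Z n ω)) ∂P :=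
        hlevel ▸ measure_ge_le_exp_mul_lintegral_exp (by fun_prop)
          (chernoffScale_nonneg ht0 hm0 n) _
    _ ≤ ENNReal.ofReal (exp (-a * (x * m ^ n))) * ENNReal.ofReal (exp (2 * t)) := by
        gcongr
        exact hGW.lintegral_exp_chernoffScale_mul_Z_le hsupp hm hmean ht0 ht.le n
    _ ≤ ENNReal.ofReal (exp 1 * exp (-(1 / 4) * ((m - 1) / m) * (x / d))) := by
        rw [← ENNReal.ofReal_mul (exp_pos _).le, ← exp_add, ← exp_add, htx]
        refine ENNReal.ofReal_le_ofReal (exp_le_exp.mpr ?_)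
        have h2t : 2 * t ≤ 1 := by
          nlinarith [mul_nonneg (mul_nonneg (sub_nonneg.mpr hd1) hm0.le) ht0]
        nlinarith [mul_le_mul_of_nonneg_right ha hx]
end

section
/- For every real x ≥ 0, the almost-sure limit W_∞ of the normalized Galton–Watson martingale satisfies P(W_∞ ≥ x) ≤ 2 · exp(−((log 3 − 1)/40) · ((m−1)/m) · (x/d)). -/
/-!
With `c = ((log 3 - 1) / 40) ((m - 1) / m) / d` and `θ n = c (1 + m⁻ⁿ) m⁻ⁿ`, convexity of `exp`
on `[0, d]` bounds the offspring generating function by `E e^{tξ} ≤ exp ((e^{td} - 1) m / d)`,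
and at `t = θ (n + 1)` this is at most `e^{θ n}`. Conditioning on the first `n` generations, the
process `exp (θ n Z n)` is therefore a nonnegative supermartingale, and Ville's maximal inequality
gives `P (∃ n, y ≤ W n) ≤ e^{θ 0 - c y} = e^{2c - c y}` because `θ n Z n ≥ c W n`. Finally
`e^{2c} ≤ 2`, and `{x ≤ W_∞}` lies in `{∃ n, y ≤ W n}` for every `y < x`.
-/

open MeasureTheory ProbabilityTheory Filter Finset Real
open scoped ENNReal

lemma exp_sub_one_mul_le {a m q : ℝ} (ha : 0 ≤ a) (h4 : 4 * a ≤ m - 1) (h2 : 2 * a ≤ 1)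
    (hq0 : 0 ≤ q) (hq1 : q ≤ 1) :
    (exp (a * (1 + q / m) * (q / m)) - 1) * m ≤ a * (1 + q) * q := by
  have hm : 1 ≤ m := by linarith
  have hqm0 : 0 ≤ q / m := by positivity
  have hqm1 : q / m ≤ 1 := (div_le_one₀ (by linarith)).2 (by linarith)
  set u := a * (1 + q / m) * (q / m) with hu
  have hu0 : 0 ≤ u := by positivity
  have hu2 : u ≤ 2 * a * (q / m) := by rw [hu]; nlinarith
  have hexp : exp u - 1 ≤ u + u ^ 2 := by
    have := abs_exp_sub_one_sub_id_le (x := u) (by rw [abs_of_nonneg hu0]; nlinarith)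
    linarith [le_abs_self (exp u - 1 - u)]
  -- `2u ≤ 4a q/m ≤ (m - 1) q/m` is exactly the room needed for `(1 + q/m)(1 + u) ≤ 1 + q`
  have hroom : (1 + q / m) * (1 + u) ≤ 1 + q := by
    have : (m - 1) * (q / m) = q - q / m := by field_simp
    nlinarith [mul_le_mul_of_nonneg_right h4 hqm0]
  calc (exp u - 1) * m ≤ (u + u ^ 2) * m := by gcongr
    _ = a * q * ((1 + q / m) * (1 + u)) := by rw [hu]; field_simp
    _ ≤ a * q * (1 + q) := by gcongr
    _ = a * (1 + q) * q := by ring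

lemma exp_mul_le_one_add {t j d : ℝ} (hd : 0 < d) (hj0 : 0 ≤ j) (hjd : j ≤ d) :
    exp (t * j) ≤ 1 + (exp (t * d) - 1) * (j / d) := by
  have hconv := convexOn_exp.2 (Set.mem_univ 0) (Set.mem_univ (t * d))
    (sub_nonneg.2 ((div_le_one hd).2 hjd)) (div_nonneg hj0 hd.le) (sub_add_cancel 1 (j / d))
  have harg : j / d * (t * d) = t * j := by field_simp
  simp only [smul_eq_mul, mul_zero, zero_add, exp_zero, mul_one, harg] at hconv
  linarith

lemma lintegral_eq_sum_range_of_support {μ : Measure ℕ} {d : ℕ} (hsupp : ∀ k, d < k → μ {k} = 0)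
    (f : ℕ → ℝ≥0∞) : ∫⁻ k, f k ∂μ = ∑ k ∈ range (d + 1), f k * μ {k} := by
  rw [lintegral_countable']
  exact tsum_eq_sum fun k hk => by rw [hsupp k (by simpa using hk), mul_zero]

lemma tsum_eq_sum_range_of_support {μ : Measure ℕ} {d : ℕ} (hsupp : ∀ k, d < k → μ {k} = 0)
    (f : ℕ → ℝ) : ∑' k, f k * (μ {k}).toReal = ∑ k ∈ range (d + 1), f k * (μ {k}).toReal :=
  tsum_eq_sum fun k hk => by rw [hsupp k (by simpa using hk), ENNReal.toReal_zero, mul_zero]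

lemma lintegral_exp_mul_le {μ : Measure ℕ} [IsProbabilityMeasure μ] {d : ℕ} (hd : 0 < d)
    (hsupp : ∀ k, d < k → μ {k} = 0) {m : ℝ} (hmean : ∑' k : ℕ, (k : ℝ) * (μ {k}).toReal = m)
    (t : ℝ) :
    ∫⁻ k, ENNReal.ofReal (exp (t * k)) ∂μ ≤ ENNReal.ofReal (exp ((exp (t * d) - 1) * (m / d))) := by
  have hd' : (0 : ℝ) < d := Nat.cast_pos.2 hd
  have hmass : ∑ k ∈ range (d + 1), (μ {k}).toReal = 1 := by
    have := lintegral_eq_sum_range_of_support hsupp 1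
    simp only [Pi.one_apply, lintegral_const, measure_univ, one_mul] at this
    rw [← ENNReal.toReal_sum (fun _ _ => measure_ne_top _ _), ← this, ENNReal.toReal_one]
  have hreal : ∑ k ∈ range (d + 1), exp (t * k) * (μ {k}).toReal
      ≤ exp ((exp (t * d) - 1) * (m / d)) :=
    calc ∑ k ∈ range (d + 1), exp (t * k) * (μ {k}).toReal
        ≤ ∑ k ∈ range (d + 1), (1 + (exp (t * d) - 1) * (k / d)) * (μ {k}).toReal := by
          gcongr with k hk
          exact exp_mul_le_one_add hd' k.cast_nonneg
            (by exact_mod_cast Finset.mem_range_succ_iff.1 hk)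
      _ = 1 + (exp (t * d) - 1) * (m / d) := by
          rw [← hmean, tsum_eq_sum_range_of_support hsupp, mul_div_assoc', Finset.mul_sum,
            Finset.sum_div]
          simp only [add_mul, one_mul, Finset.sum_add_distrib, hmass]
          exact congrArg _ (Finset.sum_congr rfl fun k _ => by ring)
      _ ≤ exp ((exp (t * d) - 1) * (m / d)) := by
          linarith [add_one_le_exp ((exp (t * d) - 1) * (m / d))]
  calc ∫⁻ k, ENNReal.ofReal (exp (t * k)) ∂μ
      = ENNReal.ofReal (∑ k ∈ range (d + 1), exp (t * k) * (μ {k}).toReal) := by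
        rw [lintegral_eq_sum_range_of_support hsupp,
          ENNReal.ofReal_sum_of_nonneg fun _ _ => by positivity]
        refine Finset.sum_congr rfl fun k _ => ?_
        rw [ENNReal.ofReal_mul (exp_nonneg _), ENNReal.ofReal_toReal (measure_ne_top _ _)]
    _ ≤ _ := ENNReal.ofReal_le_ofReal hreal

noncomputable def gwExponent (c m : ℝ) (n : ℕ) : ℝ := c * (1 + m⁻¹ ^ n) * m⁻¹ ^ n

lemma gwExponent_zero (c m : ℝ) : gwExponent c m 0 = 2 * c := by
  simp only [gwExponent, pow_zero]; ring

lemma mul_le_gwExponent_mul {c m y z : ℝ} (hc : 0 ≤ c) (hm : 0 < m) (hz : 0 ≤ z) {n : ℕ}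
    (h : y ≤ z / m ^ n) : c * y ≤ gwExponent c m n * z := by
  have hθz : gwExponent c m n * z = c * (z / m ^ n) + c * m⁻¹ ^ n * (z / m ^ n) := by
    rw [gwExponent, inv_pow, div_eq_mul_inv]; ring
  rw [hθz]
  nlinarith [mul_le_mul_of_nonneg_left h hc,
    mul_nonneg (mul_nonneg hc (pow_nonneg (inv_nonneg.2 hm.le) n)) (by positivity : 0 ≤ z / m ^ n)]

lemma lintegral_exp_gwExponent_succ_le {μ : Measure ℕ} [IsProbabilityMeasure μ] {d : ℕ}
    (hd : 0 < d) (hsupp : ∀ k, d < k → μ {k} = 0) {m : ℝ}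
    (hmean : ∑' k : ℕ, (k : ℝ) * (μ {k}).toReal = m) {a : ℝ} (ha : 0 ≤ a)
    (h4 : 4 * a ≤ m - 1) (h2 : 2 * a ≤ 1) (k : ℕ) :
    ∫⁻ j, ENNReal.ofReal (exp (gwExponent (a / d) m (k + 1) * j)) ∂μ
      ≤ ENNReal.ofReal (exp (gwExponent (a / d) m k)) := by
  have hd' : (0 : ℝ) < d := Nat.cast_pos.2 hd
  refine (lintegral_exp_mul_le hd hsupp hmean _).trans
    (ENNReal.ofReal_le_ofReal (exp_le_exp.2 ?_))
  have hq0 : 0 ≤ m⁻¹ ^ k := pow_nonneg (inv_nonneg.2 (by linarith)) k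
  have hq1 : m⁻¹ ^ k ≤ 1 := pow_le_one₀ (inv_nonneg.2 (by linarith))
    (inv_le_one_of_one_le₀ (by linarith))
  have harg : gwExponent (a / d) m (k + 1) * d = a * (1 + m⁻¹ ^ k / m) * (m⁻¹ ^ k / m) := by
    simp only [gwExponent, pow_succ]; field_simp
  have hθk : gwExponent (a / d) m k = a * (1 + m⁻¹ ^ k) * m⁻¹ ^ k / d := by
    simp only [gwExponent]; ring
  rw [harg, mul_div_assoc', hθk]
  exact div_le_div_of_nonneg_right (exp_sub_one_mul_le ha h4 h2 hq0 hq1) hd'.le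

section

variable {Ω : Type*} {m0 : MeasurableSpace Ω} {P : Measure Ω}

theorem mul_measure_biUnion_add_setLIntegral_le {ℱ : Filtration ℕ m0} {X : ℕ → Ω → ℝ≥0∞}
    (hX : ∀ n, Measurable[ℱ n] (X n))
    (hsuper : ∀ k B, MeasurableSet[ℱ k] B →
      ∫⁻ ω in B, X (k + 1) ω ∂P ≤ ∫⁻ ω in B, X k ω ∂P)
    (ε : ℝ≥0∞) (N : ℕ) :
    ε * P (⋃ n < N, {ω | ε ≤ X n ω}) + ∫⁻ ω in (⋃ n < N, {ω | ε ≤ X n ω})ᶜ, X N ω ∂P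
      ≤ ∫⁻ ω, X 0 ω ∂P := by
  set A : ℕ → Set Ω := fun n => {ω | ε ≤ X n ω}
  set E : ℕ → Set Ω := fun N => ⋃ n < N, A n with hE
  have hEmeas : ∀ N k, N ≤ k + 1 → MeasurableSet[ℱ k] (E N) := fun N k hNk =>
    MeasurableSet.iUnion fun n => MeasurableSet.iUnion fun hn =>
      ℱ.mono (by omega) _ (hX n measurableSet_Ici)
  have hstep : ∀ N, E (N + 1) = E N ∪ A N := by
    intro N; ext ω
    simp [hE, Nat.le_iff_lt_or_eq, or_and_right, exists_or]
  show ε * P (E N) + ∫⁻ ω in (E N)ᶜ, X N ω ∂P ≤ ∫⁻ ω, X 0 ω ∂P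
  induction N with
  | zero => simp [hE]
  | succ N ih =>
    have hD : MeasurableSet (A N \ E N) :=
      ℱ.le N _ ((hX N measurableSet_Ici).diff (hEmeas N N N.le_succ))
    have hsplit : (E N)ᶜ = (A N \ E N) ∪ (E (N + 1))ᶜ := by
      rw [hstep]; ext ω; simp only [Set.mem_compl_iff, Set.mem_union, Set.mem_sdiff]; tauto
    calc ε * P (E (N + 1)) + ∫⁻ ω in (E (N + 1))ᶜ, X (N + 1) ω ∂P
        ≤ ε * P (E N) + (ε * P (A N \ E N) + ∫⁻ ω in (E (N + 1))ᶜ, X N ω ∂P) := by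
          have hmass : P (E (N + 1)) = P (E N) + P (A N \ E N) := by
            rw [hstep, ← Set.union_sdiff_self, measure_union Set.disjoint_sdiff_right hD]
          rw [hmass, mul_add, add_assoc]
          gcongr _ + (_ + ?_)
          exact hsuper N _ (hEmeas _ N le_rfl).compl
      _ ≤ ε * P (E N) + (∫⁻ ω in A N \ E N, X N ω ∂P + ∫⁻ ω in (E (N + 1))ᶜ, X N ω ∂P) := by
          gcongr
          rw [← setLIntegral_const]
          exact setLIntegral_mono ((hX N).mono (ℱ.le N) le_rfl) fun ω hω => hω.1
      _ = ε * P (E N) + ∫⁻ ω in (E N)ᶜ, X N ω ∂P := by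
          rw [hsplit, lintegral_union (ℱ.le N _ (hEmeas _ N le_rfl).compl)]
          rw [hstep]
          exact Set.disjoint_left.2 fun ω h1 h2 => h2 (Or.inr h1.1)
      _ ≤ _ := ih

theorem mul_measure_exists_le_le_lintegral {ℱ : Filtration ℕ m0} {X : ℕ → Ω → ℝ≥0∞}
    (hX : ∀ n, Measurable[ℱ n] (X n))
    (hsuper : ∀ k B, MeasurableSet[ℱ k] B →
      ∫⁻ ω in B, X (k + 1) ω ∂P ≤ ∫⁻ ω in B, X k ω ∂P)
    (ε : ℝ≥0∞) : ε * P {ω | ∃ n, ε ≤ X n ω} ≤ ∫⁻ ω, X 0 ω ∂P := by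
  have hmono : Monotone fun N => ⋃ n < N, {ω | ε ≤ X n ω} := fun N N' h =>
    Set.biUnion_mono (fun n hn => lt_of_lt_of_le hn h) fun _ _ => le_rfl
  have hunion : {ω | ∃ n, ε ≤ X n ω} = ⋃ N, ⋃ n < N, {ω | ε ≤ X n ω} := by
    ext ω; simp only [Set.mem_iUnion, Set.mem_ofPred_eq]
    exact ⟨fun ⟨n, hn⟩ => ⟨n + 1, n, n.lt_succ_self, hn⟩, fun ⟨_, n, _, hn⟩ => ⟨n, hn⟩⟩
  rw [hunion, hmono.measure_iUnion, ENNReal.mul_iSup]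
  exact iSup_le fun N => le_self_add.trans (mul_measure_biUnion_add_setLIntegral_le hX hsuper ε N)

theorem measure_le_limsup_le {W : ℕ → Ω → ℝ} (hW : ∀ n ω, 0 ≤ W n ω) {f : ℝ → ℝ≥0∞}
    (hf : Continuous f) (hbound : ∀ y, P {ω | ∃ n, y ≤ W n ω} ≤ f y) (x : ℝ) :
    P {ω | x ≤ limsup (fun n => W n ω) atTop} ≤ f x := by
  refine ge_of_tendsto ((hf.tendsto x).mono_left (nhdsWithin_le_nhds (s := Set.Iio x))) ?_
  filter_upwards [self_mem_nhdsWithin] with y (hy : y < x)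
  refine le_trans (measure_mono fun ω (hω : x ≤ _) => ?_) (hbound y)
  obtain ⟨n, hn⟩ := (frequently_lt_of_lt_limsup (isCoboundedUnder_le_of_le atTop (hW · ω))
    (hy.trans_le hω)).exists
  exact ⟨n, hn.le⟩

structure IsGaltonWatson_s3 (P : Measure Ω) (μ : Measure ℕ) (ξ : ℕ → ℕ → Ω → ℕ)
    (Z : ℕ → Ω → ℕ) : Prop where
  measurable_offspring : ∀ n i, Measurable (ξ n i)
  map_offspring : ∀ n i, P.map (ξ n i) = μ
  iIndepFun_offspring : iIndepFun (fun p : ℕ × ℕ => ξ p.1 p.2) P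
  zero : ∀ ω, Z 0 ω = 1
  succ : ∀ n ω, Z (n + 1) ω = ∑ i ∈ range (Z n ω), ξ n i ω

def offspringFiltration {ξ : ℕ → ℕ → Ω → ℕ} (hξ : ∀ n i, Measurable (ξ n i)) :
    Filtration ℕ m0 where
  seq n := ⨆ p ∈ {p : ℕ × ℕ | p.1 < n}, MeasurableSpace.comap (ξ p.1 p.2) inferInstance
  mono' _ _ hnn' := biSup_mono fun _ hp => lt_of_lt_of_le hp hnn'
  le' _ := iSup₂_le fun p _ => (hξ p.1 p.2).comap_le

lemma measurable_offspringFiltration {ξ : ℕ → ℕ → Ω → ℕ} (hξ : ∀ n i, Measurable (ξ n i))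
    {n k : ℕ} (hnk : n < k) (i : ℕ) : Measurable[offspringFiltration hξ k] (ξ n i) :=
  Measurable.of_comap_le (le_iSup₂ (f := fun (p : ℕ × ℕ) (_ : p.1 < k) =>
    MeasurableSpace.comap (ξ p.1 p.2) inferInstance) (n, i) hnk)

namespace IsGaltonWatson_s3

variable {μ : Measure ℕ} {ξ : ℕ → ℕ → Ω → ℕ} {Z : ℕ → Ω → ℕ}

lemma measurable_population (h : IsGaltonWatson_s3 P μ ξ Z) (n : ℕ) :
    Measurable[offspringFiltration h.measurable_offspring n] (Z n) := by
  induction n with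
  | zero => rw [funext h.zero]; exact measurable_const
  | succ n ih =>
    let _ := offspringFiltration h.measurable_offspring (n + 1)
    have hsum : Measurable fun q : Ω × ℕ => ∑ i ∈ range q.2, ξ n i q.1 :=
      measurable_from_prod_countable_left fun y => Finset.measurable_sum (range y) fun i _ =>
        measurable_offspringFiltration h.measurable_offspring n.lt_succ_self i
    rw [funext (h.succ n)]
    exact hsum.comp
      (measurable_id.prodMk (ih.mono ((offspringFiltration _).mono n.le_succ) le_rfl))

lemma setLIntegral_prod_offspring (h : IsGaltonWatson_s3 P μ ξ Z) {k : ℕ} {C : Set Ω}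
    (hC : MeasurableSet[offspringFiltration h.measurable_offspring k] C) (f : ℕ → ℝ≥0∞)
    (z : ℕ) : ∫⁻ ω in C, ∏ i ∈ range z, f (ξ k i ω) ∂P = P C * (∫⁻ j, f j ∂μ) ^ z := by
  set ℱ := offspringFiltration h.measurable_offspring
  set M : ℕ × ℕ → MeasurableSpace Ω := fun p => MeasurableSpace.comap (ξ p.1 p.2) inferInstance
  have hMle : ∀ p, M p ≤ m0 := fun p => (h.measurable_offspring p.1 p.2).comap_le
  have hC' : MeasurableSet C := ℱ.le k _ hC
  have hf : ∀ i, Measurable fun ω => f (ξ k i ω) := fun i =>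
    (measurable_of_countable f).comp (h.measurable_offspring k i)
  have hind : Indep (ℱ k) (⨆ p ∈ {p : ℕ × ℕ | p.1 = k}, M p) P :=
    indep_iSup_of_disjoint hMle h.iIndepFun_offspring.iIndep
      (Set.disjoint_left.2 fun p (hp : p.1 < k) (hp' : p.1 = k) => hp.ne hp')
  have hprod : Measurable[⨆ p ∈ {p : ℕ × ℕ | p.1 = k}, M p]
      fun ω => ∏ i ∈ range z, f (ξ k i ω) :=
    Finset.measurable_prod _ fun i _ => (measurable_of_countable f).comp
      (Measurable.of_comap_le (le_iSup₂ (f := fun (p : ℕ × ℕ) (_ : p.1 = k) => M p) (k, i) rfl))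
  have hgen : iIndepFun (fun i ω => f (ξ k i ω)) P :=
    (h.iIndepFun_offspring.comp (fun _ => f) fun _ => measurable_of_countable f).precomp
      (Prod.mk_right_injective k)
  have hlaw : ∀ i, ∫⁻ ω, f (ξ k i ω) ∂P = ∫⁻ j, f j ∂μ := fun i => by
    rw [← h.map_offspring k i,
      lintegral_map (measurable_of_countable f) (h.measurable_offspring k i)]
  calc ∫⁻ ω in C, ∏ i ∈ range z, f (ξ k i ω) ∂P
      = ∫⁻ ω, C.indicator (fun _ => 1) ω * ∏ i ∈ range z, f (ξ k i ω) ∂P := by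
        rw [← lintegral_indicator hC']
        congr 1; ext ω; by_cases hω : ω ∈ C <;> simp [hω]
    _ = P C * ∏ i ∈ range z, ∫⁻ ω, f (ξ k i ω) ∂P := by
        rw [lintegral_mul_eq_lintegral_mul_lintegral_of_independent_measurableSpace (ℱ.le k)
          (iSup₂_le fun p _ => hMle p) hind ((measurable_const (a := (1 : ℝ≥0∞))).indicator hC)
          hprod, lintegral_indicator_const hC', one_mul,
          lintegral_prod_eq_prod_lintegral_of_indepFun _ _ hgen hf]
    _ = P C * (∫⁻ j, f j ∂μ) ^ z := by simp only [hlaw, prod_const, card_range]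

lemma setLIntegral_prod_offspring_eq (h : IsGaltonWatson_s3 P μ ξ Z) {k : ℕ} {B : Set Ω}
    (hB : MeasurableSet[offspringFiltration h.measurable_offspring k] B) (f : ℕ → ℝ≥0∞) :
    ∫⁻ ω in B, ∏ i ∈ range (Z k ω), f (ξ k i ω) ∂P = ∫⁻ ω in B, (∫⁻ j, f j ∂μ) ^ Z k ω ∂P := by
  set ℱ := offspringFiltration h.measurable_offspring
  have hBz : ∀ z, MeasurableSet[ℱ k] (B ∩ Z k ⁻¹' {z}) :=
    fun z => hB.inter (h.measurable_population k (measurableSet_singleton z))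
  have hBz' : ∀ z, MeasurableSet (B ∩ Z k ⁻¹' {z}) := fun z => ℱ.le k _ (hBz z)
  have hdisj : Pairwise (Function.onFun Disjoint fun z => B ∩ Z k ⁻¹' {z}) := fun z z' hzz' =>
    (pairwise_disjoint_fiber (Z k) hzz').mono Set.inter_subset_right Set.inter_subset_right
  have hunion : B = ⋃ z, B ∩ Z k ⁻¹' {z} := by ext ω; simp
  rw [hunion, lintegral_iUnion hBz' hdisj, lintegral_iUnion hBz' hdisj]
  refine tsum_congr fun z => ?_
  have hZ : ∀ ω ∈ B ∩ Z k ⁻¹' {z}, Z k ω = z := fun ω hω => hω.2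
  calc ∫⁻ ω in B ∩ Z k ⁻¹' {z}, ∏ i ∈ range (Z k ω), f (ξ k i ω) ∂P
      = ∫⁻ ω in B ∩ Z k ⁻¹' {z}, ∏ i ∈ range z, f (ξ k i ω) ∂P :=
        setLIntegral_congr_fun (hBz' z) fun ω hω => by rw [hZ ω hω]
    _ = ∫⁻ ω in B ∩ Z k ⁻¹' {z}, (∫⁻ j, f j ∂μ) ^ z ∂P := by
        rw [h.setLIntegral_prod_offspring (hBz z), setLIntegral_const, mul_comm]
    _ = ∫⁻ ω in B ∩ Z k ⁻¹' {z}, (∫⁻ j, f j ∂μ) ^ Z k ω ∂P :=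
        setLIntegral_congr_fun (hBz' z) fun ω hω => by rw [hZ ω hω]

lemma setLIntegral_exp_succ_le (h : IsGaltonWatson_s3 P μ ξ Z) {s t : ℝ}
    (hst : ∫⁻ j, ENNReal.ofReal (exp (s * j)) ∂μ ≤ ENNReal.ofReal (exp t)) {k : ℕ} {B : Set Ω}
    (hB : MeasurableSet[offspringFiltration h.measurable_offspring k] B) :
    ∫⁻ ω in B, ENNReal.ofReal (exp (s * Z (k + 1) ω)) ∂P
      ≤ ∫⁻ ω in B, ENNReal.ofReal (exp (t * Z k ω)) ∂P := by
  have hprod : ∀ ω, ENNReal.ofReal (exp (s * Z (k + 1) ω))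
      = ∏ i ∈ range (Z k ω), ENNReal.ofReal (exp (s * ξ k i ω)) := fun ω => by
    rw [h.succ, Nat.cast_sum, Finset.mul_sum, exp_sum,
      ENNReal.ofReal_prod_of_nonneg fun _ _ => (exp_pos _).le]
  have hpow : ∀ ω, ENNReal.ofReal (exp t) ^ Z k ω = ENNReal.ofReal (exp (t * Z k ω)) :=
    fun ω => by rw [← ENNReal.ofReal_pow (exp_pos _).le, ← exp_nat_mul, mul_comm]
  simp_rw [hprod, h.setLIntegral_prod_offspring_eq hB fun j => ENNReal.ofReal (exp (s * j)),
    ← hpow]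
  exact setLIntegral_mono ((measurable_of_countable _).comp
      ((h.measurable_population k).mono ((offspringFiltration _).le k) le_rfl))
    fun ω _ => pow_le_pow_left₀ zero_le hst _

theorem measure_exists_le_div_pow_le [IsProbabilityMeasure P] [IsProbabilityMeasure μ]
    (h : IsGaltonWatson_s3 P μ ξ Z) {d : ℕ} (hd : 0 < d) (hsupp : ∀ k, d < k → μ {k} = 0) {m : ℝ}
    (hmean : ∑' k : ℕ, (k : ℝ) * (μ {k}).toReal = m) {a : ℝ} (ha : 0 ≤ a)
    (h4 : 4 * a ≤ m - 1) (h2 : 2 * a ≤ 1) (y : ℝ) :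
    P {ω | ∃ n, y ≤ Z n ω / m ^ n} ≤ ENNReal.ofReal (exp (2 * (a / d) - a / d * y)) := by
  set c := a / d
  have hX : ∀ n, Measurable[offspringFiltration h.measurable_offspring n]
      fun ω => ENNReal.ofReal (exp (gwExponent c m n * Z n ω)) := fun n =>
    (measurable_of_countable fun z : ℕ => ENNReal.ofReal (exp (gwExponent c m n * z))).comp
      (h.measurable_population n)
  have hville := mul_measure_exists_le_le_lintegral hX
    (fun k _ hB => h.setLIntegral_exp_succ_le
      (lintegral_exp_gwExponent_succ_le hd hsupp hmean ha h4 h2 k) hB)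
    (ENNReal.ofReal (exp (c * y)))
  have hX0 : ∫⁻ ω, ENNReal.ofReal (exp (gwExponent c m 0 * Z 0 ω)) ∂P
      = ENNReal.ofReal (exp (c * y)) * ENNReal.ofReal (exp (2 * c - c * y)) := by
    rw [← ENNReal.ofReal_mul (exp_pos _).le, ← exp_add, add_sub_cancel]
    simp only [h.zero, gwExponent_zero, Nat.cast_one, mul_one, lintegral_const, measure_univ]
  have hsub : {ω | ∃ n, y ≤ Z n ω / m ^ n} ⊆ {ω | ∃ n,
      ENNReal.ofReal (exp (c * y)) ≤ ENNReal.ofReal (exp (gwExponent c m n * Z n ω))} :=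
    fun ω ⟨n, hn⟩ => ⟨n, ENNReal.ofReal_le_ofReal (exp_le_exp.2
      (mul_le_gwExponent_mul (by positivity) (by linarith) (Nat.cast_nonneg _) hn))⟩
  rw [hX0] at hville
  exact (ENNReal.mul_le_mul_iff_right (ENNReal.ofReal_pos.2 (exp_pos _)).ne'
    ENNReal.ofReal_ne_top).1 ((mul_le_mul_right (measure_mono hsub) _).trans hville)

end IsGaltonWatson_s3

end

theorem gw_tail_Winf_explicit_general
    {Ω : Type*} [MeasurableSpace Ω] (P : MeasureTheory.Measure Ω)
    [MeasureTheory.IsProbabilityMeasure P]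
    (d : ℕ) (hd : 2 ≤ d) (m : ℝ) (hm : 1 < m)
    (μ : MeasureTheory.Measure ℕ) [MeasureTheory.IsProbabilityMeasure μ]
    (hsupp : ∀ k : ℕ, d < k → μ {k} = 0)
    (hmean : ∑' k : ℕ, (k : ℝ) * (μ {k}).toReal = m)
    (ξ : ℕ → ℕ → Ω → ℕ)
    (hmeas : ∀ n i, Measurable (ξ n i))
    (hlaw : ∀ n i, MeasureTheory.Measure.map (ξ n i) P = μ)
    (hindep : ProbabilityTheory.iIndepFun
      (fun p : ℕ × ℕ => ξ p.1 p.2) P)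
    (Z : ℕ → Ω → ℕ) (hZ0 : ∀ ω, Z 0 ω = 1)
    (hZsucc : ∀ n ω, Z (n + 1) ω = ∑ i ∈ Finset.range (Z n ω), ξ n i ω)
    (W : ℕ → Ω → ℝ) (hW : ∀ n ω, W n ω = (Z n ω : ℝ) / m ^ n)
    (Winf : Ω → ℝ)
    (hWinf : ∀ ω, Winf ω = Filter.limsup (fun n => W n ω) Filter.atTop)
    (x : ℝ) :
    P {ω | x ≤ Winf ω} ≤
      ENNReal.ofReal (2 * Real.exp (-((Real.log 3 - 1) / 40) * ((m - 1) / m) * (x / d))) := by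
  have hGW : IsGaltonWatson_s3 P μ ξ Z := ⟨hmeas, hlaw, hindep, hZ0, hZsucc⟩
  have hd' : (1 : ℝ) ≤ d := by exact_mod_cast one_le_two.trans hd
  have hlog3 : 1 < log 3 ∧ log 3 ≤ 2 :=
    ⟨(lt_log_iff_exp_lt (by norm_num)).2 (exp_one_lt_d9.trans (by norm_num)),
      by linarith [log_le_sub_one_of_pos (x := 3) (by norm_num)]⟩
  have hr : 0 ≤ (m - 1) / m ∧ (m - 1) / m ≤ 1 ∧ (m - 1) / m ≤ m - 1 :=
    ⟨div_nonneg (by linarith) (by linarith), (div_le_one₀ (by linarith)).2 (by linarith),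
      div_le_self (by linarith) hm.le⟩
  set a := (log 3 - 1) / 40 * ((m - 1) / m) with ha_def
  have ha : 0 ≤ a ∧ 40 * a ≤ (m - 1) / m :=
    ⟨mul_nonneg (by linarith) hr.1, by nlinarith⟩
  have hsup := hGW.measure_exists_le_div_pow_le (by omega) hsupp hmean ha.1 (by linarith)
    (by linarith)
  have hlimsup := measure_le_limsup_le (W := W) (fun n ω => by rw [hW]; positivity)
    (f := fun y => ENNReal.ofReal (exp (2 * (a / d) - a / d * y)))
    (ENNReal.continuous_ofReal.comp (by fun_prop))
    (fun y => by simpa only [hW] using hsup y) x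
  simp only [hWinf]
  refine hlimsup.trans (ENNReal.ofReal_le_ofReal ?_)
  have h2 : exp (2 * (a / d)) ≤ 2 := by
    refine (le_log_iff_exp_le two_pos).1 (le_trans ?_ log_two_gt_d9.le)
    have : a / d ≤ a := div_le_self ha.1 hd'
    linarith
  calc exp (2 * (a / d) - a / d * x) = exp (2 * (a / d)) * exp (-(a / d * x)) := by
        rw [← exp_add]; ring_nf
    _ ≤ 2 * exp (-(a / d * x)) := by gcongr
    _ = 2 * exp (-((log 3 - 1) / 40) * ((m - 1) / m) * (x / d)) := by simp only [a]; ring_nf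

/-- For every real x ≥ 0, the a.s. limit W_∞ = limsup W_n of the normalized Galton–Watson
martingale satisfies P(W_∞ ≥ x) ≤ 2 · exp(−((log 3 − 1)/40) · ((m−1)/m) · (x/d)). -/
theorem gw_tail_Winf_explicit
    {Ω : Type*} [MeasurableSpace Ω] (P : MeasureTheory.Measure Ω)
    [MeasureTheory.IsProbabilityMeasure P]
    (d : ℕ) (hd : 2 ≤ d) (m : ℝ) (hm : 1 < m)
    (μ : MeasureTheory.Measure ℕ) [MeasureTheory.IsProbabilityMeasure μ]
    (hsupp : ∀ k : ℕ, d < k → μ {k} = 0)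
    (hmean : ∑' k : ℕ, (k : ℝ) * (μ {k}).toReal = m)
    (ξ : ℕ → ℕ → Ω → ℕ)
    (hmeas : ∀ n i, Measurable (ξ n i))
    (hlaw : ∀ n i, MeasureTheory.Measure.map (ξ n i) P = μ)
    (hindep : ProbabilityTheory.iIndepFun
      (fun p : ℕ × ℕ => ξ p.1 p.2) P)
    (Z : ℕ → Ω → ℕ) (hZ0 : ∀ ω, Z 0 ω = 1)
    (hZsucc : ∀ n ω, Z (n + 1) ω = ∑ i ∈ Finset.range (Z n ω), ξ n i ω)
    (W : ℕ → Ω → ℝ) (hW : ∀ n ω, W n ω = (Z n ω : ℝ) / m ^ n)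
    (Winf : Ω → ℝ)
    (hWinf : ∀ ω, Winf ω = Filter.limsup (fun n => W n ω) Filter.atTop)
    (x : ℝ) (hx : 0 ≤ x) :
    P {ω | x ≤ Winf ω} ≤
      ENNReal.ofReal (2 * Real.exp (-((Real.log 3 - 1) / 40) * ((m - 1) / m) * (x / d))) :=
  gw_tail_Winf_explicit_general P d hd m hm μ hsupp hmean ξ hmeas hlaw hindep Z hZ0 hZsucc W hW Winf
    hWinf x
end

section
/- For every real x > 0, P( sup_{n∈ℕ} W_n ≥ x ) ≤ (1 + d/(m−1)) · x^{−2}. -/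
/-!
Conditionally on the first `n` generations, `Z (n + 1)` is a sum of `Z n` independent draws
from `μ`. Jensen's inequality for that sum gives `E[Z_{n+1}² | ℱ n] ≥ m² Z_n²`, so `W_n²` is a
submartingale, while expanding the square gives `E Z_{n+1}² ≤ m² E Z_n² + q mⁿ` with
`q = ∑ k² μ{k} ≤ d m`, hence `E W_n² ≤ 1 + q / (m (m - 1)) ≤ 1 + d / (m - 1)`. Doob's maximal
inequality bounds `P(max_{k ≤ n} W_k ≥ y)` by this constant over `y²`; let `n → ∞`, then `y ↑ x`.
-/

open MeasureTheory ProbabilityTheory Finset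
open scoped ENNReal

section General

variable {α : Type*} [mα : MeasurableSpace α] {μ : Measure α}

lemma sq_lintegral_le_lintegral_sq [IsProbabilityMeasure μ] {f : α → ℝ≥0∞}
    (hf : AEMeasurable f μ) : (∫⁻ a, f a ∂μ) ^ 2 ≤ ∫⁻ a, f a ^ 2 ∂μ := by
  have h := ENNReal.lintegral_mul_le_Lp_mul_Lq μ Real.HolderConjugate.two_two hf
    (aemeasurable_const (b := 1))
  simp only [Pi.mul_apply, mul_one, one_pow, ENNReal.one_rpow, lintegral_const, measure_univ,
    ENNReal.rpow_two] at h
  calc (∫⁻ a, f a ∂μ) ^ 2 ≤ ((∫⁻ a, f a ^ 2 ∂μ) ^ (1 / 2 : ℝ)) ^ 2 := by gcongr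
    _ = ∫⁻ a, f a ^ 2 ∂μ := by
      rw [← ENNReal.rpow_natCast, ← ENNReal.rpow_mul]; norm_num

lemma setLIntegral_eq_tsum_inter_preimage_singleton {C : Set α} (hC : MeasurableSet C)
    {Y : α → ℕ} (hY : Measurable Y) (f : α → ℝ≥0∞) :
    ∫⁻ a in C, f a ∂μ = ∑' l, ∫⁻ a in C ∩ Y ⁻¹' {l}, f a ∂μ := by
  conv_lhs => rw [show C = ⋃ l, C ∩ Y ⁻¹' {l} by ext; simp]
  exact lintegral_iUnion (fun l => hC.inter (hY (measurableSet_singleton l)))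
    (fun i j hij => ((Set.disjoint_singleton.2 hij).preimage Y).mono
      Set.inter_subset_right Set.inter_subset_right) f

lemma setLIntegral_eq_measure_mul_lintegral_of_indep {m₁ m₂ : MeasurableSpace α}
    (hm₁ : m₁ ≤ mα) (hm₂ : m₂ ≤ mα) (hind : Indep m₁ m₂ μ) {D : Set α}
    (hD : MeasurableSet[m₁] D) {f : α → ℝ≥0∞} (hf : Measurable[m₂] f) :
    ∫⁻ a in D, f a ∂μ = μ D * ∫⁻ a, f a ∂μ := by
  rw [← lintegral_indicator_one (hm₁ _ hD), ← lintegral_indicator (hm₁ _ hD),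
    ← lintegral_mul_eq_lintegral_mul_lintegral_of_independent_measurableSpace hm₁ hm₂ hind
      (f := D.indicator 1) (measurable_const.indicator hD) hf]
  congr 1 with a
  by_cases ha : a ∈ D <;> simp [ha]

lemma integral_natCast_sq_eq_toReal_lintegral {Y : α → ℕ} (hY : Measurable Y) :
    ∫ a, (Y a : ℝ) ^ 2 ∂μ = (∫⁻ a, (Y a : ℝ≥0∞) ^ 2 ∂μ).toReal := by
  rw [← integral_toReal (by fun_prop) (ae_of_all _ fun a => by simp)]
  simp

end General

section SumMoments

variable {Ω : Type*} [MeasurableSpace Ω] {P : Measure Ω} {X : ℕ → Ω → ℕ} {μ : Measure ℕ}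

lemma lintegral_sum_eq_mul (hX : ∀ i, Measurable (X i)) (hlaw : ∀ i, P.map (X i) = μ)
    (l : ℕ) :
    ∫⁻ ω, ((∑ i ∈ range l, X i ω : ℕ) : ℝ≥0∞) ∂P = l * ∫⁻ k, (k : ℝ≥0∞) ∂μ := by
  have hmean : ∀ i, ∫⁻ ω, (X i ω : ℝ≥0∞) ∂P = ∫⁻ k, (k : ℝ≥0∞) ∂μ := fun i => by
    rw [← hlaw i, lintegral_map (measurable_of_countable _) (hX i)]
  push_cast
  rw [lintegral_finsetSum _ fun i _ => by fun_prop]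
  simp only [hmean, sum_const, card_range, nsmul_eq_mul]

lemma lintegral_sum_sq_le (hX : ∀ i, Measurable (X i)) (hlaw : ∀ i, P.map (X i) = μ)
    (hindep : Pairwise fun i j => IndepFun (X i) (X j) P) (l : ℕ) :
    ∫⁻ ω, ((∑ i ∈ range l, X i ω : ℕ) : ℝ≥0∞) ^ 2 ∂P
      ≤ l * ∫⁻ k, (k : ℝ≥0∞) ^ 2 ∂μ + l ^ 2 * (∫⁻ k, (k : ℝ≥0∞) ∂μ) ^ 2 := by
  have hXc : ∀ i, Measurable fun ω => (X i ω : ℝ≥0∞) := fun i => by fun_prop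
  have hmoment : ∀ (g : ℕ → ℝ≥0∞) i, ∫⁻ ω, g (X i ω) ∂P = ∫⁻ k, g k ∂μ := fun g i => by
    rw [← lintegral_map (measurable_of_countable g) (hX i), hlaw]
  have hpair : ∀ i j, ∫⁻ ω, (X i ω : ℝ≥0∞) * X j ω ∂P
      ≤ (if i = j then ∫⁻ k, (k : ℝ≥0∞) ^ 2 ∂μ else 0) + (∫⁻ k, (k : ℝ≥0∞) ∂μ) ^ 2 := by
    intro i j
    rcases eq_or_ne i j with rfl | hij
    · simp only [← sq, hmoment fun k => (k : ℝ≥0∞) ^ 2]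
      exact le_self_add
    · rw [lintegral_mul_eq_lintegral_mul_lintegral_of_indepFun'' (hXc i).aemeasurable
        (hXc j).aemeasurable
        ((hindep hij).comp (measurable_of_countable _) (measurable_of_countable _)),
        hmoment Nat.cast, hmoment Nat.cast, if_neg hij, zero_add, sq]
  calc ∫⁻ ω, ((∑ i ∈ range l, X i ω : ℕ) : ℝ≥0∞) ^ 2 ∂P
      = ∑ i ∈ range l, ∑ j ∈ range l, ∫⁻ ω, (X i ω : ℝ≥0∞) * X j ω ∂P := by
        simp only [Nat.cast_sum, sq, sum_mul_sum]
        rw [lintegral_finsetSum _ fun i _ => by fun_prop]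
        exact sum_congr rfl fun i _ => lintegral_finsetSum _ fun j _ => by fun_prop
    _ ≤ ∑ i ∈ range l, ∑ j ∈ range l,
          ((if i = j then ∫⁻ k, (k : ℝ≥0∞) ^ 2 ∂μ else 0) + (∫⁻ k, (k : ℝ≥0∞) ∂μ) ^ 2) :=
        sum_le_sum fun i _ => sum_le_sum fun j _ => hpair i j
    _ = l * ∫⁻ k, (k : ℝ≥0∞) ^ 2 ∂μ + l ^ 2 * (∫⁻ k, (k : ℝ≥0∞) ∂μ) ^ 2 := by
        simp only [sum_add_distrib, sum_ite_eq, mem_range, sum_const, card_range, nsmul_eq_mul]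
        rw [sum_ite_of_true fun i hi => mem_range.1 hi]
        simp only [sum_const, card_range, nsmul_eq_mul]
        ring

end SumMoments

section BoundedSupport

variable {μ : Measure ℕ} {d : ℕ}

lemma ae_le_of_measure_singleton_eq_zero (hsupp : ∀ k, d < k → μ {k} = 0) :
    ∀ᵐ k ∂μ, k ≤ d := by
  rw [ae_iff, ← Set.biUnion_of_singleton {k | ¬k ≤ d}]
  exact (measure_biUnion_null_iff (Set.to_countable _)).2 fun k hk => hsupp k (not_le.1 hk)

lemma lintegral_natCast_sq_le_mul (hsupp : ∀ k, d < k → μ {k} = 0) :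
    ∫⁻ k, (k : ℝ≥0∞) ^ 2 ∂μ ≤ d * ∫⁻ k, (k : ℝ≥0∞) ∂μ := by
  rw [← lintegral_const_mul _ (measurable_of_countable _)]
  refine lintegral_mono_ae ((ae_le_of_measure_singleton_eq_zero hsupp).mono fun k hk => ?_)
  rw [sq]
  gcongr

lemma lintegral_natCast_eq_ofReal_tsum [IsFiniteMeasure μ] (hsupp : ∀ k, d < k → μ {k} = 0) :
    ∫⁻ k, (k : ℝ≥0∞) ∂μ = ENNReal.ofReal (∑' k : ℕ, (k : ℝ) * (μ {k}).toReal) := by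
  have hfin : ∀ k ∉ range (d + 1), μ {k} = 0 := fun k hk => hsupp k (by simpa using hk)
  rw [lintegral_countable', tsum_eq_sum (s := range (d + 1)) fun k hk => by simp [hfin k hk],
    tsum_eq_sum (s := range (d + 1)) fun k hk => by simp [hfin k hk],
    ENNReal.ofReal_sum_of_nonneg fun k _ => by positivity]
  refine sum_congr rfl fun k _ => ?_
  rw [ENNReal.ofReal_mul (by positivity), ENNReal.ofReal_natCast,
    ENNReal.ofReal_toReal (measure_ne_top _ _)]

end BoundedSupport

lemma le_ofReal_of_second_moment_recursion {a : ℕ → ℝ≥0∞} {m q : ℝ} (hm : 1 < m)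
    (hq : 0 ≤ q) (h0 : a 0 ≤ 1)
    (hs : ∀ n, a (n + 1) ≤ ENNReal.ofReal m ^ 2 * a n + ENNReal.ofReal q * ENNReal.ofReal m ^ n)
    (n : ℕ) : a n ≤ ENNReal.ofReal (m ^ (2 * n) * (1 + q / (m * (m - 1)))) := by
  have hm0 : 0 < m := by linarith
  have hm1 : 0 < m - 1 := by linarith
  have hpow : ∀ n, 0 ≤ m ^ n - 1 := fun n => sub_nonneg.2 (one_le_pow₀ hm.le)
  set u : ℕ → ℝ := fun n => m ^ (2 * n) + q * m ^ n * (m ^ n - 1) / (m * (m - 1)) with hu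
  have hu0 : ∀ n, 0 ≤ u n := fun n => by have := hpow n; positivity
  have hu_succ : ∀ n, u (n + 1) = m ^ 2 * u n + q * m ^ n := fun n => by
    simp only [hu]; field_simp; ring
  suffices h : ∀ n, a n ≤ ENNReal.ofReal (u n) by
    refine (h n).trans (ENNReal.ofReal_le_ofReal ?_)
    simp only [hu]
    rw [mul_add, mul_one, mul_div_assoc', mul_comm (m ^ (2 * n)) q, pow_mul', sq, mul_assoc]
    gcongr
    linarith
  intro n
  induction n with
  | zero => simpa [hu] using h0
  | succ n ih =>
    calc a (n + 1)
        ≤ ENNReal.ofReal m ^ 2 * ENNReal.ofReal (u n) + ENNReal.ofReal q * ENNReal.ofReal m ^ n :=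
          (hs n).trans (by gcongr)
      _ = ENNReal.ofReal (u (n + 1)) := by
        rw [hu_succ, ← ENNReal.ofReal_pow hm0.le, ← ENNReal.ofReal_pow hm0.le,
          ← ENNReal.ofReal_mul (by positivity), ← ENNReal.ofReal_mul hq,
          ← ENNReal.ofReal_add (by have := hu0 n; positivity) (by positivity)]

open Filter Topology in
lemma le_ofReal_div_sq_of_forall_lt {a : ℝ≥0∞} {K x : ℝ} (hx : 0 < x)
    (h : ∀ y, 0 < y → y < x → a ≤ ENNReal.ofReal (K / y ^ 2)) :
    a ≤ ENNReal.ofReal (K / x ^ 2) := by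
  have hcont : ContinuousAt (fun y : ℝ => ENNReal.ofReal (K / y ^ 2)) x :=
    ENNReal.continuous_ofReal.continuousAt.comp
      (continuousAt_const.div (continuous_pow 2).continuousAt (by positivity))
  exact ge_of_tendsto hcont.continuousWithinAt.tendsto
    (by filter_upwards [Ioo_mem_nhdsLT hx] with y hy using h y hy.1 hy.2)

namespace GaltonWatson

variable {Ω : Type*} {ξ : ℕ → ℕ → Ω → ℕ}

abbrev offspringSigma (ξ : ℕ → ℕ → Ω → ℕ) (s : Set (ℕ × ℕ)) : MeasurableSpace Ω :=
  ⨆ p ∈ s, MeasurableSpace.comap (ξ p.1 p.2) inferInstance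

lemma measurable_offspringSigma {s : Set (ℕ × ℕ)} {n i : ℕ} (h : (n, i) ∈ s) :
    Measurable[offspringSigma ξ s] (ξ n i) :=
  Measurable.of_comap_le <| le_iSup₂ (f := fun p (_ : p ∈ s) =>
    MeasurableSpace.comap (ξ p.1 p.2) inferInstance) (n, i) h

variable [mΩ : MeasurableSpace Ω] {P : Measure Ω}

lemma offspringSigma_le (hmeas : ∀ n i, Measurable (ξ n i)) (s : Set (ℕ × ℕ)) :
    offspringSigma ξ s ≤ mΩ :=
  iSup₂_le fun p _ => (hmeas p.1 p.2).comap_le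

lemma indep_offspringSigma_compl (hmeas : ∀ n i, Measurable (ξ n i))
    (hindep : iIndepFun (fun p : ℕ × ℕ => ξ p.1 p.2) P) (s : Set (ℕ × ℕ)) :
    Indep (offspringSigma ξ s) (offspringSigma ξ sᶜ) P :=
  indep_biSup_compl (s := fun p : ℕ × ℕ => MeasurableSpace.comap (ξ p.1 p.2) inferInstance)
    (fun p => (hmeas p.1 p.2).comap_le) hindep s

def offspringFiltration (hmeas : ∀ n i, Measurable (ξ n i)) : Filtration ℕ mΩ where
  seq n := offspringSigma ξ {p | p.1 < n}
  mono' _ _ hab := biSup_mono fun _ hp => lt_of_lt_of_le hp hab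
  le' _ := offspringSigma_le hmeas _

variable (hmeas : ∀ n i, Measurable (ξ n i)) {Z : ℕ → Ω → ℕ} (hZ0 : ∀ ω, Z 0 ω = 1)
  (hZsucc : ∀ n ω, Z (n + 1) ω = ∑ i ∈ range (Z n ω), ξ n i ω)
include hmeas hZ0 hZsucc

lemma adapted_generation : Adapted (offspringFiltration hmeas) Z := by
  intro n
  induction n with
  | zero => simp only [show Z 0 = fun _ => 1 from funext hZ0, measurable_const]
  | succ n ih =>
    have hξ : ∀ i, Measurable[offspringFiltration hmeas (n + 1)] (ξ n i) := fun i =>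
      measurable_offspringSigma (s := {p | p.1 < n + 1}) (Nat.lt_succ_self n)
    have hsum : Measurable[(offspringFiltration hmeas (n + 1)).prod inferInstance]
        fun q : Ω × ℕ => ∑ i ∈ range q.2, ξ n i q.1 :=
      @measurable_from_prod_countable_left _ _ _ (offspringFiltration hmeas (n + 1)) _ _ _ _ _
        fun l => Finset.measurable_sum (range l) fun i _ => hξ i
    rw [show Z (n + 1) = fun ω => ∑ i ∈ range (Z n ω), ξ n i ω from funext (hZsucc n)]
    exact hsum.comp (measurable_id.prodMk
      (ih.mono ((offspringFiltration hmeas).mono n.le_succ) le_rfl))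

lemma measurable_generation (n : ℕ) : Measurable (Z n) :=
  (adapted_generation hmeas hZ0 hZsucc n).mono ((offspringFiltration hmeas).le n) le_rfl

lemma setLIntegral_comp_generation_succ
    (hindep : iIndepFun (fun p : ℕ × ℕ => ξ p.1 p.2) P) {n : ℕ} {C : Set Ω}
    (hC : MeasurableSet[offspringFiltration hmeas n] C) (g : ℕ → ℝ≥0∞) :
    ∫⁻ ω in C, g (Z (n + 1) ω) ∂P
      = ∫⁻ ω in C, ∫⁻ ω', g (∑ i ∈ range (Z n ω), ξ n i ω') ∂P ∂P := by
  have hZ := measurable_generation hmeas hZ0 hZsucc n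
  have hCm : MeasurableSet C := (offspringFiltration hmeas).le n _ hC
  rw [setLIntegral_eq_tsum_inter_preimage_singleton hCm hZ,
    setLIntegral_eq_tsum_inter_preimage_singleton hCm hZ]
  refine tsum_congr fun l => ?_
  have hD : MeasurableSet[offspringFiltration hmeas n] (C ∩ Z n ⁻¹' {l}) :=
    hC.inter (adapted_generation hmeas hZ0 hZsucc n (measurableSet_singleton l))
  have hDm := (offspringFiltration hmeas).le n _ hD
  have hfuture : Measurable[offspringSigma ξ {p | p.1 < n}ᶜ]
      fun ω => g (∑ i ∈ range l, ξ n i ω) :=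
    (measurable_of_countable g).comp
      (Finset.measurable_sum _ fun i _ => measurable_offspringSigma (by simp))
  calc ∫⁻ ω in C ∩ Z n ⁻¹' {l}, g (Z (n + 1) ω) ∂P
      = ∫⁻ ω in C ∩ Z n ⁻¹' {l}, g (∑ i ∈ range l, ξ n i ω) ∂P :=
        setLIntegral_congr_fun hDm fun ω hω => by rw [hZsucc, show Z n ω = l from hω.2]
    _ = P (C ∩ Z n ⁻¹' {l}) * ∫⁻ ω, g (∑ i ∈ range l, ξ n i ω) ∂P :=
        setLIntegral_eq_measure_mul_lintegral_of_indep (offspringSigma_le hmeas _)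
          (offspringSigma_le hmeas _) (indep_offspringSigma_compl hmeas hindep _) hD hfuture
    _ = ∫⁻ ω in C ∩ Z n ⁻¹' {l}, ∫⁻ ω', g (∑ i ∈ range (Z n ω), ξ n i ω') ∂P ∂P := by
        rw [setLIntegral_congr_fun hDm fun ω hω => by rw [show Z n ω = l from hω.2],
          setLIntegral_const, mul_comm]

lemma lintegral_comp_generation_succ
    (hindep : iIndepFun (fun p : ℕ × ℕ => ξ p.1 p.2) P) (n : ℕ) (g : ℕ → ℝ≥0∞) :
    ∫⁻ ω, g (Z (n + 1) ω) ∂P = ∫⁻ ω, ∫⁻ ω', g (∑ i ∈ range (Z n ω), ξ n i ω') ∂P ∂P := by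
  simpa only [Measure.restrict_univ] using
    setLIntegral_comp_generation_succ hmeas hZ0 hZsucc hindep MeasurableSet.univ g

variable [IsProbabilityMeasure P] {μ : Measure ℕ} (hlaw : ∀ n i, P.map (ξ n i) = μ)
  (hindep : iIndepFun (fun p : ℕ × ℕ => ξ p.1 p.2) P)
include hlaw hindep

lemma lintegral_generation (n : ℕ) :
    ∫⁻ ω, (Z n ω : ℝ≥0∞) ∂P = (∫⁻ k, (k : ℝ≥0∞) ∂μ) ^ n := by
  induction n with
  | zero => simp [hZ0]
  | succ n ih =>
    have := measurable_generation hmeas hZ0 hZsucc n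
    simp only [lintegral_comp_generation_succ hmeas hZ0 hZsucc hindep n Nat.cast,
      lintegral_sum_eq_mul (hmeas n) (hlaw n)]
    rw [lintegral_mul_const _ (by fun_prop), ih, pow_succ]

lemma lintegral_generation_succ_sq_le (n : ℕ) :
    ∫⁻ ω, (Z (n + 1) ω : ℝ≥0∞) ^ 2 ∂P
      ≤ (∫⁻ k, (k : ℝ≥0∞) ∂μ) ^ 2 * ∫⁻ ω, (Z n ω : ℝ≥0∞) ^ 2 ∂P
        + (∫⁻ k, (k : ℝ≥0∞) ^ 2 ∂μ) * (∫⁻ k, (k : ℝ≥0∞) ∂μ) ^ n := by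
  have hrow : Pairwise fun i j => IndepFun (ξ n i) (ξ n j) P := fun i j hij =>
    hindep.indepFun (i := (n, i)) (j := (n, j)) (by simp [hij])
  have := measurable_generation hmeas hZ0 hZsucc n
  rw [lintegral_comp_generation_succ hmeas hZ0 hZsucc hindep n fun k => (k : ℝ≥0∞) ^ 2]
  calc ∫⁻ ω, ∫⁻ ω', ((∑ i ∈ range (Z n ω), ξ n i ω' : ℕ) : ℝ≥0∞) ^ 2 ∂P ∂P
      ≤ ∫⁻ ω, ((Z n ω : ℝ≥0∞) * ∫⁻ k, (k : ℝ≥0∞) ^ 2 ∂μ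
          + (Z n ω : ℝ≥0∞) ^ 2 * (∫⁻ k, (k : ℝ≥0∞) ∂μ) ^ 2) ∂P :=
        lintegral_mono fun ω => lintegral_sum_sq_le (hmeas n) (hlaw n) hrow (Z n ω)
    _ = _ := by
        rw [lintegral_add_left (by fun_prop), lintegral_mul_const _ (by fun_prop),
          lintegral_mul_const _ (by fun_prop), lintegral_generation hmeas hZ0 hZsucc hlaw hindep]
        ring

lemma sq_mul_setLIntegral_generation_sq_le_succ {n : ℕ} {C : Set Ω}
    (hC : MeasurableSet[offspringFiltration hmeas n] C) :
    (∫⁻ k, (k : ℝ≥0∞) ∂μ) ^ 2 * ∫⁻ ω in C, (Z n ω : ℝ≥0∞) ^ 2 ∂P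
      ≤ ∫⁻ ω in C, (Z (n + 1) ω : ℝ≥0∞) ^ 2 ∂P := by
  have := measurable_generation hmeas hZ0 hZsucc n
  rw [setLIntegral_comp_generation_succ hmeas hZ0 hZsucc hindep hC fun k => (k : ℝ≥0∞) ^ 2,
    ← lintegral_const_mul _ (by fun_prop)]
  refine lintegral_mono fun ω => ?_
  calc (∫⁻ k, (k : ℝ≥0∞) ∂μ) ^ 2 * (Z n ω : ℝ≥0∞) ^ 2
      = (∫⁻ ω', ((∑ i ∈ range (Z n ω), ξ n i ω' : ℕ) : ℝ≥0∞) ∂P) ^ 2 := by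
        rw [lintegral_sum_eq_mul (hmeas n) (hlaw n), mul_pow, mul_comm]
    _ ≤ ∫⁻ ω', ((∑ i ∈ range (Z n ω), ξ n i ω' : ℕ) : ℝ≥0∞) ^ 2 ∂P :=
        sq_lintegral_le_lintegral_sq (by fun_prop)

variable {m q : ℝ} (hm : 1 < m) (hq : 0 ≤ q)
  (hM1 : ∫⁻ k, (k : ℝ≥0∞) ∂μ = ENNReal.ofReal m)
  (hM2 : ∫⁻ k, (k : ℝ≥0∞) ^ 2 ∂μ = ENNReal.ofReal q)
include hm hq hM1 hM2

lemma lintegral_generation_sq_le (n : ℕ) :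
    ∫⁻ ω, (Z n ω : ℝ≥0∞) ^ 2 ∂P ≤ ENNReal.ofReal (m ^ (2 * n) * (1 + q / (m * (m - 1)))) :=
  le_ofReal_of_second_moment_recursion (a := fun n => ∫⁻ ω, (Z n ω : ℝ≥0∞) ^ 2 ∂P) hm hq
    (by simp [hZ0])
    (fun n => by simpa only [hM1, hM2] using
      lintegral_generation_succ_sq_le hmeas hZ0 hZsucc hlaw hindep n) n

lemma integrable_generation_sq (n : ℕ) : Integrable (fun ω => (Z n ω : ℝ) ^ 2) P := by
  have := measurable_generation hmeas hZ0 hZsucc n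
  simpa using integrable_toReal_of_lintegral_ne_top (f := fun ω => (Z n ω : ℝ≥0∞) ^ 2)
    (by fun_prop) (ne_top_of_le_ne_top ENNReal.ofReal_ne_top
      (lintegral_generation_sq_le hmeas hZ0 hZsucc hlaw hindep hm hq hM1 hM2 n))

lemma sq_mul_setIntegral_generation_sq_le_succ {n : ℕ} {C : Set Ω}
    (hC : MeasurableSet[offspringFiltration hmeas n] C) :
    m ^ 2 * ∫ ω in C, (Z n ω : ℝ) ^ 2 ∂P ≤ ∫ ω in C, (Z (n + 1) ω : ℝ) ^ 2 ∂P := by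
  rw [integral_natCast_sq_eq_toReal_lintegral (measurable_generation hmeas hZ0 hZsucc n),
    integral_natCast_sq_eq_toReal_lintegral (measurable_generation hmeas hZ0 hZsucc (n + 1))]
  have hfin : ∫⁻ ω in C, (Z (n + 1) ω : ℝ≥0∞) ^ 2 ∂P ≠ ⊤ :=
    ne_top_of_le_ne_top ENNReal.ofReal_ne_top ((setLIntegral_le_lintegral _ _).trans
      (lintegral_generation_sq_le hmeas hZ0 hZsucc hlaw hindep hm hq hM1 hM2 (n + 1)))
  calc m ^ 2 * (∫⁻ ω in C, (Z n ω : ℝ≥0∞) ^ 2 ∂P).toReal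
      = (ENNReal.ofReal m ^ 2 * ∫⁻ ω in C, (Z n ω : ℝ≥0∞) ^ 2 ∂P).toReal := by
        rw [ENNReal.toReal_mul, ENNReal.toReal_pow, ENNReal.toReal_ofReal (by linarith)]
    _ ≤ _ := ENNReal.toReal_mono hfin
        (hM1 ▸ sq_mul_setLIntegral_generation_sq_le_succ hmeas hZ0 hZsucc hlaw hindep hC)

lemma submartingale_normalized_sq :
    Submartingale (fun n ω => ((Z n ω : ℝ) / m ^ n) ^ 2) (offspringFiltration hmeas) P := by
  have hm0 : 0 < m := by linarith
  refine submartingale_of_setIntegral_le_succ (fun n => ?_) (fun n => ?_) fun n C hC => ?_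
  · exact ((measurable_of_countable fun k : ℕ => ((k : ℝ) / m ^ n) ^ 2).comp
      (adapted_generation hmeas hZ0 hZsucc n)).stronglyMeasurable
  · simp only [div_pow]
    exact (integrable_generation_sq hmeas hZ0 hZsucc hlaw hindep hm hq hM1 hM2 n).div_const _
  · simp only [div_pow]
    rw [integral_div, integral_div, div_le_div_iff₀ (by positivity) (by positivity)]
    have hI : 0 ≤ ∫ ω in C, (Z n ω : ℝ) ^ 2 ∂P := integral_nonneg fun _ => sq_nonneg _
    calc (∫ ω in C, (Z n ω : ℝ) ^ 2 ∂P) * (m ^ (n + 1)) ^ 2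
        = (m ^ 2 * ∫ ω in C, (Z n ω : ℝ) ^ 2 ∂P) * (m ^ n) ^ 2 := by ring
      _ ≤ (∫ ω in C, (Z (n + 1) ω : ℝ) ^ 2 ∂P) * (m ^ n) ^ 2 := by
        gcongr
        exact sq_mul_setIntegral_generation_sq_le_succ hmeas hZ0 hZsucc hlaw hindep hm hq hM1
          hM2 hC

lemma integral_normalized_sq_le (n : ℕ) :
    ∫ ω, ((Z n ω : ℝ) / m ^ n) ^ 2 ∂P ≤ 1 + q / (m * (m - 1)) := by
  have hm0 : 0 < m := by linarith
  simp only [div_pow]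
  rw [integral_div, div_le_iff₀ (by positivity),
    integral_natCast_sq_eq_toReal_lintegral (measurable_generation hmeas hZ0 hZsucc n),
    ← pow_mul, mul_comm n, mul_comm _ (m ^ _)]
  exact ENNReal.toReal_le_of_le_ofReal (by positivity)
    (lintegral_generation_sq_le hmeas hZ0 hZsucc hlaw hindep hm hq hM1 hM2 n)

lemma measure_exists_le_le_normalized_le {y : ℝ} (hy : 0 < y) (n : ℕ) :
    P {ω | ∃ k ≤ n, y ≤ (Z k ω : ℝ) / m ^ k}
      ≤ ENNReal.ofReal ((1 + q / (m * (m - 1))) / y ^ 2) := by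
  have hsub := submartingale_normalized_sq hmeas hZ0 hZsucc hlaw hindep hm hq hM1 hM2
  have hmax : {ω | ∃ k ≤ n, y ≤ (Z k ω : ℝ) / m ^ k}
      ⊆ {ω | ((y ^ 2).toNNReal : ℝ) ≤ (range (n + 1)).sup' nonempty_range_add_one
          fun k => ((Z k ω : ℝ) / m ^ k) ^ 2} := by
    rintro ω ⟨k, hk, hyk⟩
    rw [Real.coe_toNNReal _ (sq_nonneg y)]
    exact le_sup'_of_le (fun k => ((Z k ω : ℝ) / m ^ k) ^ 2)
      (mem_range.2 (Nat.lt_succ_of_le hk)) (pow_le_pow_left₀ hy.le hyk 2)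
  rw [ENNReal.ofReal_div_of_pos (by positivity), ENNReal.le_div_iff_mul_le
    (Or.inl (by simp; positivity)) (Or.inl ENNReal.ofReal_ne_top), mul_comm]
  calc ENNReal.ofReal (y ^ 2) * P {ω | ∃ k ≤ n, y ≤ (Z k ω : ℝ) / m ^ k}
      ≤ ENNReal.ofReal (y ^ 2) * P {ω | ((y ^ 2).toNNReal : ℝ) ≤ (range (n + 1)).sup'
          nonempty_range_add_one fun k => ((Z k ω : ℝ) / m ^ k) ^ 2} := by
        gcongr
    _ ≤ _ := maximal_ineq hsub (fun _ _ => sq_nonneg _) n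
    _ ≤ ENNReal.ofReal (∫ ω, ((Z n ω : ℝ) / m ^ n) ^ 2 ∂P) :=
        ENNReal.ofReal_le_ofReal
          (setIntegral_le_integral (hsub.integrable n) (ae_of_all _ fun _ => sq_nonneg _))
    _ ≤ _ := ENNReal.ofReal_le_ofReal
        (integral_normalized_sq_le hmeas hZ0 hZsucc hlaw hindep hm hq hM1 hM2 n)

lemma measure_exists_le_normalized_le {y : ℝ} (hy : 0 < y) :
    P {ω | ∃ n, y ≤ (Z n ω : ℝ) / m ^ n}
      ≤ ENNReal.ofReal ((1 + q / (m * (m - 1))) / y ^ 2) :=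
  calc P {ω | ∃ n, y ≤ (Z n ω : ℝ) / m ^ n}
      = P (⋃ n, {ω | ∃ k ≤ n, y ≤ (Z k ω : ℝ) / m ^ k}) := by
        congr 1
        ext ω
        simp only [Set.mem_ofPred_eq, Set.mem_iUnion]
        exact ⟨fun ⟨n, h⟩ => ⟨n, n, le_rfl, h⟩, fun ⟨_, k, _, h⟩ => ⟨k, h⟩⟩
    _ = ⨆ n, P {ω | ∃ k ≤ n, y ≤ (Z k ω : ℝ) / m ^ k} :=
        Monotone.measure_iUnion fun a b hab ω ⟨k, hk, h⟩ => ⟨k, hk.trans hab, h⟩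
    _ ≤ _ := iSup_le
        (measure_exists_le_le_normalized_le hmeas hZ0 hZsucc hlaw hindep hm hq hM1 hM2 hy)

end GaltonWatson

theorem gw_sup_maximal_inequality_general
    {Ω : Type*} [MeasurableSpace Ω] (P : MeasureTheory.Measure Ω)
    [MeasureTheory.IsProbabilityMeasure P]
    (d : ℕ) (m : ℝ) (hm : 1 < m)
    (μ : MeasureTheory.Measure ℕ) [MeasureTheory.IsProbabilityMeasure μ]
    (hsupp : ∀ k : ℕ, d < k → μ {k} = 0)
    (hmean : ∑' k : ℕ, (k : ℝ) * (μ {k}).toReal = m)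
    (ξ : ℕ → ℕ → Ω → ℕ)
    (hmeas : ∀ n i, Measurable (ξ n i))
    (hlaw : ∀ n i, MeasureTheory.Measure.map (ξ n i) P = μ)
    (hindep : ProbabilityTheory.iIndepFun
      (fun p : ℕ × ℕ => ξ p.1 p.2) P)
    (Z : ℕ → Ω → ℕ) (hZ0 : ∀ ω, Z 0 ω = 1)
    (hZsucc : ∀ n ω, Z (n + 1) ω = ∑ i ∈ Finset.range (Z n ω), ξ n i ω)
    (W : ℕ → Ω → ℝ) (hW : ∀ n ω, W n ω = (Z n ω : ℝ) / m ^ n)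
    (x : ℝ) (hx : 0 < x) :
    P {ω | ENNReal.ofReal x ≤ ⨆ n, ENNReal.ofReal (W n ω)} ≤
      ENNReal.ofReal ((1 + (d : ℝ) / (m - 1)) / x ^ 2) := by
  obtain rfl : W = fun n ω => (Z n ω : ℝ) / m ^ n := funext fun n => funext (hW n)
  have hM1 : ∫⁻ k, (k : ℝ≥0∞) ∂μ = ENNReal.ofReal m :=
    hmean ▸ lintegral_natCast_eq_ofReal_tsum hsupp
  have hM2 : ∫⁻ k, (k : ℝ≥0∞) ^ 2 ∂μ ≤ ENNReal.ofReal (d * m) := by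
    rw [ENNReal.ofReal_mul (Nat.cast_nonneg d), ENNReal.ofReal_natCast, ← hM1]
    exact lintegral_natCast_sq_le_mul hsupp
  set q := (∫⁻ k, (k : ℝ≥0∞) ^ 2 ∂μ).toReal
  have hqd : q / (m * (m - 1)) ≤ d / (m - 1) := by
    rw [← mul_div_mul_left (d : ℝ) (m - 1) (by positivity : m ≠ 0)]
    gcongr
    rw [mul_comm]
    exact ENNReal.toReal_le_of_le_ofReal (by positivity) hM2
  refine le_ofReal_div_sq_of_forall_lt hx fun y hy hyx => ?_
  calc P {ω | ENNReal.ofReal x ≤ ⨆ n, ENNReal.ofReal ((Z n ω : ℝ) / m ^ n)}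
      ≤ P {ω | ∃ n, y ≤ (Z n ω : ℝ) / m ^ n} := by
        refine measure_mono fun ω hω => ?_
        obtain ⟨n, hn⟩ := lt_iSup_iff.1 (((ENNReal.ofReal_lt_ofReal_iff hx).2 hyx).trans_le hω)
        exact ⟨n, (ENNReal.ofReal_lt_ofReal_iff'.1 hn).1.le⟩
    _ ≤ ENNReal.ofReal ((1 + q / (m * (m - 1))) / y ^ 2) :=
        GaltonWatson.measure_exists_le_normalized_le hmeas hZ0 hZsucc hlaw hindep hm
          ENNReal.toReal_nonneg hM1
          (ENNReal.ofReal_toReal (ne_top_of_le_ne_top ENNReal.ofReal_ne_top hM2)).symm hy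
    _ ≤ ENNReal.ofReal ((1 + d / (m - 1)) / y ^ 2) := by gcongr

/-- For every real x > 0, P(sup_{n ∈ ℕ} W_n ≥ x) ≤ (1 + d/(m−1)) · x^{−2}.
(The supremum is taken in ℝ≥0∞ via ENNReal.ofReal, which is faithful since W_n ≥ 0.) -/
theorem gw_sup_maximal_inequality
    {Ω : Type*} [MeasurableSpace Ω] (P : MeasureTheory.Measure Ω)
    [MeasureTheory.IsProbabilityMeasure P]
    (d : ℕ) (hd : 2 ≤ d) (m : ℝ) (hm : 1 < m)
    (μ : MeasureTheory.Measure ℕ) [MeasureTheory.IsProbabilityMeasure μ]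
    (hsupp : ∀ k : ℕ, d < k → μ {k} = 0)
    (hmean : ∑' k : ℕ, (k : ℝ) * (μ {k}).toReal = m)
    (ξ : ℕ → ℕ → Ω → ℕ)
    (hmeas : ∀ n i, Measurable (ξ n i))
    (hlaw : ∀ n i, MeasureTheory.Measure.map (ξ n i) P = μ)
    (hindep : ProbabilityTheory.iIndepFun
      (fun p : ℕ × ℕ => ξ p.1 p.2) P)
    (Z : ℕ → Ω → ℕ) (hZ0 : ∀ ω, Z 0 ω = 1)
    (hZsucc : ∀ n ω, Z (n + 1) ω = ∑ i ∈ Finset.range (Z n ω), ξ n i ω)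
    (W : ℕ → Ω → ℝ) (hW : ∀ n ω, W n ω = (Z n ω : ℝ) / m ^ n)
    (x : ℝ) (hx : 0 < x) :
    P {ω | ENNReal.ofReal x ≤ ⨆ n, ENNReal.ofReal (W n ω)} ≤
      ENNReal.ofReal ((1 + (d : ℝ) / (m - 1)) / x ^ 2) :=
  gw_sup_maximal_inequality_general P d m hm μ hsupp hmean ξ hmeas hlaw hindep Z hZ0 hZsucc W hW x
    hx
end

section
/- For every k ∈ ℕ and every p ∈ [0,1), the binomial distribution Bin(k, p) is stochastically dominated by the Poisson distribution Pois(k·p/(1−p)); that is, for every j ∈ ℕ, P(X ≥ j) ≤ P(Y ≥ j) where X has distribution Bin(k,p) and Y has distribution Pois(k·p/(1−p)). -/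
/-!
Bin(k, p) is the k-fold convolution of Bernoulli(p), and Pois(kμ) is the k-fold convolution of
Pois(μ). Stochastic order is preserved under convolution with nonnegative mass functions, so it
suffices to compare Bernoulli(p) with Pois(μ), which only needs the atoms at 0 to satisfy
e^{-μ} ≤ 1 - p. For μ = p/(1-p) this is e^μ ≥ 1 + μ = 1/(1-p).
-/

open Finset Real Nat

namespace StochasticDomination

def cdf (f : ℕ → ℝ) (j : ℕ) : ℝ := ∑ i ∈ range j, f i

def conv (f g : ℕ → ℝ) (n : ℕ) : ℝ := ∑ x ∈ antidiagonal n, f x.1 * g x.2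

def StochLE (f g : ℕ → ℝ) : Prop := ∀ j, cdf g j ≤ cdf f j

def binomial (p : ℝ) (k i : ℕ) : ℝ := k.choose i * p ^ i * (1 - p) ^ (k - i)

noncomputable def poisson (μ : ℝ) (i : ℕ) : ℝ := exp (-μ) * μ ^ i / i !

lemma conv_comm (f g : ℕ → ℝ) : conv f g = conv g f := by
  ext n
  rw [conv, ← Nat.sum_antidiagonal_swap]
  simp only [conv, Prod.fst_swap, Prod.snd_swap, mul_comm]

lemma cdf_conv (f g : ℕ → ℝ) (j : ℕ) :
    cdf (conv f g) j = ∑ a ∈ range j, f a * cdf g (j - a) := by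
  simp only [cdf, conv, Nat.sum_antidiagonal_eq_sum_range_succ fun a b => f a * g b,
    sum_range_diag_flip j fun a b => f a * g b, mul_sum]

lemma StochLE.trans {f g h : ℕ → ℝ} (hfg : StochLE f g) (hgh : StochLE g h) : StochLE f h :=
  fun j => (hgh j).trans (hfg j)

lemma StochLE.conv_left {f g g' : ℕ → ℝ} (hf : 0 ≤ f) (hg : StochLE g g') :
    StochLE (conv f g) (conv f g') := fun j => by
  rw [cdf_conv, cdf_conv]
  exact sum_le_sum fun a _ => mul_le_mul_of_nonneg_left (hg _) (hf a)

lemma StochLE.conv {f f' g g' : ℕ → ℝ} (hf : 0 ≤ f) (hg' : 0 ≤ g') (hff' : StochLE f f')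
    (hgg' : StochLE g g') : StochLE (conv f g) (conv f' g') := by
  refine (hgg'.conv_left hf).trans ?_
  rw [conv_comm f, conv_comm f']
  exact hff'.conv_left hg'

lemma binomial_nonneg {p : ℝ} (hp0 : 0 ≤ p) (hp1 : p ≤ 1) (k : ℕ) : 0 ≤ binomial p k := by
  intro i
  have : 0 ≤ 1 - p := by linarith
  unfold binomial; positivity

lemma binomial_add (p : ℝ) (m n : ℕ) :
    binomial p (m + n) = conv (binomial p m) (binomial p n) := by
  ext i
  simp only [binomial, conv, Nat.add_choose_eq, Nat.cast_sum, Nat.cast_mul, sum_mul]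
  refine sum_congr rfl fun x hx => ?_
  rw [HasAntidiagonal.mem_antidiagonal] at hx
  rcases lt_or_ge m x.1 with h | h
  · simp [Nat.choose_eq_zero_of_lt h]
  rcases lt_or_ge n x.2 with h' | h'
  · simp [Nat.choose_eq_zero_of_lt h']
  rw [← hx, show m + n - (x.1 + x.2) = (m - x.1) + (n - x.2) by omega]
  ring

lemma cdf_binomial_succ_self (p : ℝ) (k : ℕ) : cdf (binomial p k) (k + 1) = 1 := by
  have := (add_pow p (1 - p) k).symm
  simp only [add_sub_cancel, one_pow] at this
  rw [← this, cdf]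
  exact sum_congr rfl fun i _ => by simp only [binomial]; ring

lemma cdf_binomial_of_lt (p : ℝ) {k j : ℕ} (h : k < j) : cdf (binomial p k) j = 1 := by
  rw [cdf, ← sum_range_add_sum_Ico _ h, ← cdf, cdf_binomial_succ_self, add_eq_left]
  exact sum_eq_zero fun i hi => by
    simp [binomial, Nat.choose_eq_zero_of_lt (mem_Ico.1 hi).1]

lemma sum_Icc_binomial (p : ℝ) (k j : ℕ) :
    ∑ i ∈ Icc j k, binomial p k i = 1 - cdf (binomial p k) j := by
  rcases le_or_gt j k with h | h
  · rw [← cdf_binomial_succ_self p k, cdf, cdf, ← sum_range_add_sum_Ico _ (by omega : j ≤ k + 1),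
      Ico_add_one_right_eq_Icc]
    ring
  · rw [Icc_eq_empty_of_lt h, cdf_binomial_of_lt p h, sum_empty, sub_self]

lemma poisson_nonneg {μ : ℝ} (hμ : 0 ≤ μ) : 0 ≤ poisson μ := fun i => by
  unfold poisson; positivity

lemma poisson_add (μ ν : ℝ) : poisson (μ + ν) = conv (poisson μ) (poisson ν) := by
  ext n
  rw [poisson, conv, Nat.sum_antidiagonal_eq_sum_range_succ fun a b => poisson μ a * poisson ν b,
    add_pow, neg_add, exp_add, mul_sum, sum_div]
  refine sum_congr rfl fun a ha => ?_
  have han : a ≤ n := Nat.lt_succ_iff.1 (mem_range.1 ha)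
  have hfac := Nat.choose_mul_factorial_mul_factorial han
  have hchoose : (n.choose a : ℝ) ≠ 0 := Nat.cast_ne_zero.2 (Nat.choose_pos han).ne'
  rw [← hfac]
  simp only [poisson]
  push_cast
  field_simp

lemma hasSum_poisson (μ : ℝ) : HasSum (poisson μ) 1 := by
  have h := (NormedSpace.expSeries_div_hasSum_exp μ).mul_left (exp (-μ))
  rw [← exp_eq_exp_ℝ, ← exp_add, neg_add_cancel, exp_zero] at h
  rwa [show poisson μ = _ from funext fun i => mul_div_assoc (exp (-μ)) (μ ^ i) (i ! : ℝ)]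

lemma cdf_le_one {f : ℕ → ℝ} (hf : 0 ≤ f) (h1 : HasSum f 1) (j : ℕ) : cdf f j ≤ 1 :=
  sum_le_hasSum _ (fun i _ => hf i) h1

lemma tsum_tail_eq_one_sub_cdf {f : ℕ → ℝ} (h1 : HasSum f 1) (j : ℕ) :
    ∑' i : {i : ℕ // j ≤ i}, f i = 1 - cdf f j := by
  have h := h1.summable.sum_add_tsum_subtype_compl (range j)
  have he := (Equiv.subtypeEquivRight fun i : ℕ => (by simp : i ∉ range j ↔ j ≤ i)).tsum_eq
    fun i : {i : ℕ // j ≤ i} => f i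
  rw [h1.tsum_eq] at h
  rw [← he, cdf, ← h]
  simp

lemma bernoulli_stochLE_poisson {p μ : ℝ} (hμ : 0 ≤ μ) (h : exp (-μ) ≤ 1 - p) :
    StochLE (binomial p 1) (poisson μ)
  | 0 => by simp [cdf]
  | 1 => by simpa [cdf, binomial, poisson] using h
  | j + 2 => by
    rw [cdf_binomial_of_lt p (by omega)]
    exact cdf_le_one (poisson_nonneg hμ) (hasSum_poisson μ) _

lemma binomial_stochLE_poisson {p μ : ℝ} (hp0 : 0 ≤ p) (hμ : 0 ≤ μ) (h : exp (-μ) ≤ 1 - p) :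
    ∀ k : ℕ, StochLE (binomial p k) (poisson (k * μ))
  | 0 => fun j => by
    rcases j with _ | j
    · simp [cdf]
    · rw [cdf_binomial_of_lt p j.succ_pos]
      exact cdf_le_one (poisson_nonneg (by simp)) (hasSum_poisson _) _
  | k + 1 => by
    have hp1 : p ≤ 1 := by linarith [exp_pos (-μ)]
    rw [binomial_add, Nat.cast_succ, add_mul, one_mul, poisson_add]
    exact (binomial_stochLE_poisson hp0 hμ h k).conv (binomial_nonneg hp0 hp1 k)
      (poisson_nonneg hμ) (bernoulli_stochLE_poisson hμ h)

lemma exp_neg_div_one_sub_le {p : ℝ} (hp1 : p < 1) : exp (-(p / (1 - p))) ≤ 1 - p := by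
  have hq : 0 < 1 - p := sub_pos.2 hp1
  rw [exp_neg, inv_le_comm₀ (exp_pos _) hq]
  calc (1 - p)⁻¹ = p / (1 - p) + 1 := by field_simp; ring
    _ ≤ exp (p / (1 - p)) := add_one_le_exp _

end StochasticDomination

open StochasticDomination

/-- For every k ∈ ℕ and p ∈ [0,1), the binomial distribution Bin(k,p) is stochastically
dominated by the Poisson distribution Pois(k·p/(1−p)): for every j ∈ ℕ,
P(Bin(k,p) ≥ j) ≤ P(Pois(k·p/(1−p)) ≥ j), written out with explicit mass functions. -/
theorem binomial_stochastically_dominated_by_poisson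
    (k : ℕ) (p : ℝ) (hp0 : 0 ≤ p) (hp1 : p < 1) (j : ℕ) :
    ∑ i ∈ Finset.Icc j k, (k.choose i : ℝ) * p ^ i * (1 - p) ^ (k - i) ≤
      ∑' i : {i : ℕ // j ≤ i},
        Real.exp (-(k * p / (1 - p))) * (k * p / (1 - p)) ^ (i : ℕ) /
          (Nat.factorial i : ℝ) := by
  change ∑ i ∈ Icc j k, binomial p k i ≤ ∑' i : {i : ℕ // j ≤ i}, poisson (k * p / (1 - p)) i
  have hdom := binomial_stochLE_poisson hp0 (div_nonneg hp0 (sub_pos.2 hp1).le)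
    (exp_neg_div_one_sub_le hp1) k j
  rw [← mul_div_assoc] at hdom
  rw [sum_Icc_binomial, tsum_tail_eq_one_sub_cdf (hasSum_poisson _)]
  linarith
end

section
/- For every real θ with 0 ≤ θ < ((log 3 − 1)/40) · (m−1)/(m·d), the almost-sure limit W_∞ of the normalized Galton–Watson martingale has a finite exponential moment: E[ exp(θ·W_∞) ] < ∞. -/
/-!
Conditionally on the first `n` generations, `Z (n + 1)` is a sum of `Z n` independent copies of
the offspring number, so `E[exp (b Z_n + t Z_{n+1})] = E[exp (b Z_n) ψ(t) ^ Z_n]` where `ψ` is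
the offspring moment generating function; offspring numbers are at most `d`, so
`ψ(t) ≤ exp (t m + d m t²)` for `|t| d ≤ 1`. The weights `u_k = θ (1 + m⁻ᵏ) m⁻ᵏ` satisfy
`u_{k+1} m + d m u_{k+1}² ≤ u_k` once `4 d m θ ≤ m - 1`, so `E[exp (u_k Z_k)]` does not increase
with `k`, and `E[exp (θ W_n)] ≤ E[exp (u_n Z_n)] ≤ exp u_0 = exp (2θ)`.
The same estimate with `b = -t m` bounds the exponential moments of `W_{n+1} - W_n` at scales of
order `√m ^ n`, hence `∑ E|W_{n+1} - W_n| < ∞` and `W_n` converges almost surely; Fatou's lemma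
passes the bound `exp (2θ)` to the limit.
-/

open MeasureTheory ProbabilityTheory Filter Topology Real
open scoped ENNReal

lemma abs_le_exp_add_exp_neg (x : ℝ) : |x| ≤ exp x + exp (-x) := by
  have h1 := add_one_le_exp x
  have h2 := add_one_le_exp (-x)
  rcases abs_cases x with ⟨h, _⟩ | ⟨h, _⟩ <;> rw [h] <;> linarith [exp_pos x, exp_pos (-x)]

lemma sum_exp_mul_le_exp {d : ℕ} {p : ℕ → ℝ} {m t : ℝ} (hp : ∀ k, 0 ≤ p k)
    (hp1 : ∑ k ∈ Finset.range (d + 1), p k = 1)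
    (hpm : ∑ k ∈ Finset.range (d + 1), k * p k = m) (ht : |t| * d ≤ 1) :
    ∑ k ∈ Finset.range (d + 1), exp (t * k) * p k ≤ exp (t * m + d * m * t ^ 2) := by
  have hterm : ∀ k ∈ Finset.range (d + 1),
      exp (t * k) * p k ≤ p k + t * (k * p k) + d * t ^ 2 * (k * p k) := fun k hk => by
    have hkd : (k : ℝ) ≤ d := by exact_mod_cast Nat.lt_succ_iff.1 (Finset.mem_range.1 hk)
    have hx : |t * k| ≤ 1 := by
      rw [abs_mul, Nat.abs_cast]
      nlinarith [abs_nonneg t]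
    have hexp := (abs_le.1 (abs_exp_sub_one_sub_id_le hx)).2
    have hsq : (t * k) ^ 2 ≤ d * t ^ 2 * k := by
      nlinarith [mul_nonneg (mul_nonneg (sq_nonneg t) k.cast_nonneg) (sub_nonneg.2 hkd)]
    nlinarith [hp k]
  calc ∑ k ∈ Finset.range (d + 1), exp (t * k) * p k
      ≤ ∑ k ∈ Finset.range (d + 1), (p k + t * (k * p k) + d * t ^ 2 * (k * p k)) :=
        Finset.sum_le_sum hterm
    _ = 1 + t * m + d * m * t ^ 2 := by
        rw [Finset.sum_add_distrib, Finset.sum_add_distrib, ← Finset.mul_sum, ← Finset.mul_sum,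
          hp1, hpm]
        ring
    _ ≤ exp (t * m + d * m * t ^ 2) := by linarith [add_one_le_exp (t * m + d * m * t ^ 2)]

section Measure

variable {ι Ω β : Type*} [mβ : MeasurableSpace β]

lemma measurable_biSup_comap {X : ι → Ω → β} {S : Set ι} {p : ι} (hp : p ∈ S) :
    Measurable[⨆ q ∈ S, mβ.comap (X q)] (X p) :=
  Measurable.of_comap_le (le_biSup (fun q => mβ.comap (X q)) hp)

variable [MeasurableSpace Ω] {P : Measure Ω}

lemma lintegral_mul_comp_eq_of_iIndepFun {X : ι → Ω → β} (hX : ∀ i, Measurable (X i))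
    (hind : iIndepFun X P) {S : Set ι} {q : ι} (hq : q ∉ S) {f : Ω → ℝ≥0∞}
    (hf : Measurable[⨆ p ∈ S, mβ.comap (X p)] f) {g : β → ℝ≥0∞} (hg : Measurable g) :
    ∫⁻ ω, f ω * g (X q ω) ∂P = (∫⁻ ω, f ω ∂P) * ∫⁻ ω, g (X q ω) ∂P := by
  have hindep : Indep (⨆ p ∈ S, mβ.comap (X p)) (mβ.comap (X q)) P := by
    simpa only [iSup_singleton] using indep_iSup_of_disjoint (fun p => (hX p).comap_le)
      hind.iIndep (Set.disjoint_singleton_right.2 hq)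
  exact lintegral_mul_eq_lintegral_mul_lintegral_of_independent_measurableSpace
    (iSup₂_le fun p _ => (hX p).comap_le) (hX q).comap_le hindep hf
    (hg.comp (comap_measurable (X q)))

lemma lintegral_comp_eq_tsum_setLIntegral {Y : Ω → ℕ} (hY : Measurable Y)
    {F : ℕ → Ω → ℝ≥0∞} (hF : ∀ j, Measurable (F j)) :
    ∫⁻ ω, F (Y ω) ω ∂P = ∑' j, ∫⁻ ω in Y ⁻¹' {j}, F j ω ∂P := by
  have hpt : ∀ ω, F (Y ω) ω = ∑' j, (Y ⁻¹' {j}).indicator (F j) ω := fun ω => by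
    rw [tsum_eq_single (f := fun j => (Y ⁻¹' {j}).indicator (F j) ω) (Y ω) fun j hj =>
        Set.indicator_of_notMem (s := Y ⁻¹' {j}) (fun h => hj (Set.mem_singleton_iff.1 h).symm) _,
      Set.indicator_of_mem (show ω ∈ Y ⁻¹' {Y ω} from rfl)]
  simp_rw [hpt]
  rw [lintegral_tsum fun j => ((hF j).indicator (hY (measurableSet_singleton j))).aemeasurable]
  exact tsum_congr fun j => lintegral_indicator (hY (measurableSet_singleton j)) _

lemma ae_tendsto_of_tsum_lintegral_abs_sub_ne_top {f : ℕ → Ω → ℝ}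
    (hf : ∀ n, Measurable (f n))
    (hsum : ∑' n, ∫⁻ ω, ENNReal.ofReal |f (n + 1) ω - f n ω| ∂P ≠ ∞) :
    ∀ᵐ ω ∂P, ∃ L, Tendsto (fun n => f n ω) atTop (𝓝 L) := by
  have hmeas : ∀ n, Measurable fun ω => ENNReal.ofReal |f (n + 1) ω - f n ω| := fun n =>
    ENNReal.measurable_ofReal.comp ((hf (n + 1)).sub (hf n)).abs
  rw [← lintegral_tsum fun n => (hmeas n).aemeasurable] at hsum
  filter_upwards [ae_lt_top (Measurable.tsum hmeas) hsum] with ω hω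
  have hΔ : Summable fun n => f (n + 1) ω - f n ω := by
    rw [← summable_abs_iff]
    simpa only [ENNReal.toReal_ofReal (abs_nonneg _)] using ENNReal.summable_toReal hω.ne
  refine ⟨f 0 ω + ∑' n, (f (n + 1) ω - f n ω), ?_⟩
  simpa only [Finset.sum_range_sub (fun i => f i ω), add_sub_cancel] using
    hΔ.hasSum.tendsto_sum_nat.const_add (f 0 ω)

lemma ae_tendsto_of_lintegral_exp_mul_sub_le {f : ℕ → Ω → ℝ} (hf : ∀ n, Measurable (f n))
    {r : ℕ → ℝ} (hr : ∀ n, 0 < r n) (hsum : Summable fun n => (r n)⁻¹)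
    {C : ℝ≥0∞} (hC : C ≠ ∞)
    (hplus : ∀ n, ∫⁻ ω, ENNReal.ofReal (exp (r n * (f (n + 1) ω - f n ω))) ∂P ≤ C)
    (hminus : ∀ n, ∫⁻ ω, ENNReal.ofReal (exp (-r n * (f (n + 1) ω - f n ω))) ∂P ≤ C) :
    ∀ᵐ ω ∂P, ∃ L, Tendsto (fun n => f n ω) atTop (𝓝 L) := by
  have hL1 : ∀ n, ∫⁻ ω, ENNReal.ofReal |f (n + 1) ω - f n ω| ∂P
      ≤ ENNReal.ofReal (r n)⁻¹ * (C + C) := fun n => by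
    have hexp : ∀ t : ℝ,
        Measurable fun ω => ENNReal.ofReal (exp (t * (f (n + 1) ω - f n ω))) := fun t => by
      fun_prop
    calc ∫⁻ ω, ENNReal.ofReal |f (n + 1) ω - f n ω| ∂P
        ≤ ∫⁻ ω, ENNReal.ofReal (r n)⁻¹
            * (ENNReal.ofReal (exp (r n * (f (n + 1) ω - f n ω)))
              + ENNReal.ofReal (exp (-r n * (f (n + 1) ω - f n ω)))) ∂P := by
          refine lintegral_mono fun ω => ?_
          rw [← ENNReal.ofReal_add (exp_pos _).le (exp_pos _).le,
            ← ENNReal.ofReal_mul (inv_nonneg.2 (hr n).le)]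
          refine ENNReal.ofReal_le_ofReal ?_
          have h := abs_le_exp_add_exp_neg (r n * (f (n + 1) ω - f n ω))
          rw [abs_mul, abs_of_pos (hr n), neg_mul_eq_neg_mul] at h
          rwa [le_inv_mul_iff₀ (hr n)]
      _ = ENNReal.ofReal (r n)⁻¹
            * ((∫⁻ ω, ENNReal.ofReal (exp (r n * (f (n + 1) ω - f n ω))) ∂P)
              + ∫⁻ ω, ENNReal.ofReal (exp (-r n * (f (n + 1) ω - f n ω))) ∂P) := by
          rw [lintegral_const_mul' _ _ ENNReal.ofReal_ne_top, lintegral_add_left (hexp _)]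
      _ ≤ ENNReal.ofReal (r n)⁻¹ * (C + C) := by gcongr <;> [exact hplus n; exact hminus n]
  refine ae_tendsto_of_tsum_lintegral_abs_sub_ne_top hf
    (ne_top_of_le_ne_top ?_ (ENNReal.tsum_le_tsum hL1))
  rw [ENNReal.tsum_mul_right,
    ← ENNReal.ofReal_tsum_of_nonneg (fun n => (inv_pos.2 (hr n)).le) hsum]
  exact ENNReal.mul_ne_top ENNReal.ofReal_ne_top (ENNReal.add_ne_top.2 ⟨hC, hC⟩)

lemma integrable_of_tendsto_of_lintegral_enorm_le {G : ℕ → Ω → ℝ} {g : Ω → ℝ}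
    (hG : ∀ n, AEStronglyMeasurable (G n) P)
    (hGg : ∀ᵐ ω ∂P, Tendsto (fun n => G n ω) atTop (𝓝 (g ω)))
    {C : ℝ≥0∞} (hC : C ≠ ∞) (hle : ∀ n, ∫⁻ ω, ‖G n ω‖ₑ ∂P ≤ C) :
    Integrable g P := by
  refine ⟨aestronglyMeasurable_of_tendsto_ae _ hG hGg, ?_⟩
  calc ∫⁻ ω, ‖g ω‖ₑ ∂P = ∫⁻ ω, liminf (fun n => ‖G n ω‖ₑ) atTop ∂P :=
        lintegral_congr_ae (by filter_upwards [hGg] with ω hω using hω.enorm.liminf_eq.symm)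
    _ ≤ liminf (fun n => ∫⁻ ω, ‖G n ω‖ₑ ∂P) atTop :=
        lintegral_liminf_le' fun n => (hG n).aemeasurable.enorm
    _ ≤ C := liminf_le_of_frequently_le' (Frequently.of_forall hle)
    _ < ∞ := hC.lt_top

end Measure

namespace GaltonWatson

noncomputable def offspringMGF (μ : Measure ℕ) (t : ℝ) : ℝ≥0∞ :=
  ∫⁻ k, ENNReal.ofReal (exp (t * k)) ∂μ

lemma offspringMGF_le {μ : Measure ℕ} [IsProbabilityMeasure μ] {d : ℕ} {m t : ℝ}
    (hsupp : ∀ k : ℕ, d < k → μ {k} = 0)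
    (hmean : ∑' k : ℕ, (k : ℝ) * (μ {k}).toReal = m) (ht : |t| * d ≤ 1) :
    offspringMGF μ t ≤ ENNReal.ofReal (exp (t * m + d * m * t ^ 2)) := by
  have hout : ∀ k ∉ Finset.range (d + 1), μ {k} = 0 := fun k hk =>
    hsupp k (by simpa [Nat.lt_succ_iff] using hk)
  have hfin : ∀ f : ℕ → ℝ≥0∞, ∫⁻ k, f k ∂μ = ∑ k ∈ Finset.range (d + 1), f k * μ {k} :=
    fun f => (lintegral_countable' f).trans (tsum_eq_sum fun k hk => by rw [hout k hk, mul_zero])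
  have hp1 : ∑ k ∈ Finset.range (d + 1), (μ {k}).toReal = 1 := by
    have h := hfin 1
    simp only [Pi.one_apply, lintegral_one, measure_univ, one_mul] at h
    rw [← ENNReal.toReal_sum fun k _ => measure_ne_top μ _, ← h, ENNReal.toReal_one]
  have hpm : ∑ k ∈ Finset.range (d + 1), (k : ℝ) * (μ {k}).toReal = m :=
    (tsum_eq_sum fun k hk => by rw [hout k hk, ENNReal.toReal_zero, mul_zero]).symm.trans hmean
  calc offspringMGF μ t
      = ENNReal.ofReal (∑ k ∈ Finset.range (d + 1), exp (t * k) * (μ {k}).toReal) := by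
        rw [offspringMGF, hfin, ENNReal.ofReal_sum_of_nonneg fun k _ => by positivity]
        refine Finset.sum_congr rfl fun k _ => ?_
        rw [ENNReal.ofReal_mul (exp_pos _).le, ENNReal.ofReal_toReal (measure_ne_top μ _)]
    _ ≤ ENNReal.ofReal (exp (t * m + d * m * t ^ 2)) :=
        ENNReal.ofReal_le_ofReal (sum_exp_mul_le_exp (fun _ => ENNReal.toReal_nonneg) hp1 hpm ht)

def expWeight (θ y : ℝ) : ℝ := θ * (1 + y) * y

lemma expWeight_mul_add_sq_le {d θ m y : ℝ} (hd : 0 ≤ d) (hθ : 0 ≤ θ) (hm : 0 ≤ m)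
    (hy0 : 0 ≤ y) (hy1 : y ≤ 1) (hθm : 4 * d * θ ≤ m - 1) :
    expWeight θ y * m + d * m * expWeight θ y ^ 2 ≤ expWeight θ (m * y) := by
  rw [expWeight, expWeight]
  have hsq : d * θ * (1 + y) ^ 2 ≤ m - 1 := by
    nlinarith [mul_le_mul_of_nonneg_left (show (1 + y) ^ 2 ≤ 4 by nlinarith) (mul_nonneg hd hθ)]
  nlinarith [mul_nonneg (mul_nonneg (mul_nonneg hθ hm) (sq_nonneg y)) (sub_nonneg.2 hsq)]

variable {Ω : Type*} [MeasurableSpace Ω]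

structure IsGaltonWatson (P : Measure Ω) (μ : Measure ℕ) (ξ : ℕ → ℕ → Ω → ℕ)
    (Z : ℕ → Ω → ℕ) : Prop where
  measurable_offspring : ∀ n i, Measurable (ξ n i)
  map_offspring : ∀ n i, P.map (ξ n i) = μ
  iIndepFun_offspring : iIndepFun (fun p : ℕ × ℕ => ξ p.1 p.2) P
  zero : ∀ ω, Z 0 ω = 1
  succ : ∀ n ω, Z (n + 1) ω = ∑ i ∈ Finset.range (Z n ω), ξ n i ω

abbrev pastSigma (ξ : ℕ → ℕ → Ω → ℕ) (n : ℕ) : MeasurableSpace Ω :=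
  ⨆ p ∈ {q : ℕ × ℕ | q.1 < n}, MeasurableSpace.comap (ξ p.1 p.2) inferInstance

variable {P : Measure Ω} {μ : Measure ℕ} {ξ : ℕ → ℕ → Ω → ℕ} {Z : ℕ → Ω → ℕ}

namespace IsGaltonWatson

lemma measurable_pastSigma (hZ : IsGaltonWatson P μ ξ Z) (n : ℕ) :
    Measurable[pastSigma ξ n] (Z n) := by
  induction n with
  | zero => rw [show Z 0 = fun _ => 1 from funext hZ.zero]; exact measurable_const
  | succ n ih =>
    have hmono : pastSigma ξ n ≤ pastSigma ξ (n + 1) :=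
      biSup_mono fun p hp => Nat.lt_succ_of_lt hp
    have hξ : ∀ i, Measurable[pastSigma ξ (n + 1)] (ξ n i) := fun i =>
      measurable_biSup_comap (X := fun p : ℕ × ℕ => ξ p.1 p.2)
        (show (n, i) ∈ {q : ℕ × ℕ | q.1 < n + 1} from n.lt_succ_self)
    rw [show Z (n + 1) = (fun x : Ω × ℕ => ∑ i ∈ Finset.range x.2, ξ n i x.1)
      ∘ fun ω => (ω, Z n ω) from funext (hZ.succ n)]
    exact (measurable_from_prod_countable_left fun j =>
      Finset.measurable_sum (Finset.range j) fun i _ => hξ i).comp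
      (measurable_id.prodMk (ih.mono hmono le_rfl))

lemma measurable (hZ : IsGaltonWatson P μ ξ Z) (n : ℕ) : Measurable (Z n) :=
  (hZ.measurable_pastSigma n).mono
    (iSup₂_le fun p _ => (hZ.measurable_offspring p.1 p.2).comap_le) le_rfl

lemma measurable_div_pow (hZ : IsGaltonWatson P μ ξ Z) (m : ℝ) (n : ℕ) :
    Measurable fun ω => (Z n ω : ℝ) / m ^ n :=
  (measurable_from_nat.comp (hZ.measurable n)).div_const _

lemma lintegral_exp_mul_offspring (hZ : IsGaltonWatson P μ ξ Z) (n i : ℕ) (t : ℝ) :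
    ∫⁻ ω, ENNReal.ofReal (exp (t * ξ n i ω)) ∂P = offspringMGF μ t := by
  rw [offspringMGF, ← hZ.map_offspring n i,
    lintegral_map measurable_from_nat (hZ.measurable_offspring n i)]

lemma lintegral_mul_exp_sum (hZ : IsGaltonWatson P μ ξ Z) {n : ℕ} {f : Ω → ℝ≥0∞}
    (hf : Measurable[pastSigma ξ n] f) (t : ℝ) (j : ℕ) :
    ∫⁻ ω, f ω * ENNReal.ofReal (exp (t * ∑ i ∈ Finset.range j, (ξ n i ω : ℝ))) ∂P
      = (∫⁻ ω, f ω ∂P) * offspringMGF μ t ^ j := by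
  induction j with
  | zero => simp
  | succ j ih =>
    set S := {q : ℕ × ℕ | q.1 < n ∨ q.1 = n ∧ q.2 < j}
    have hexp : Measurable fun k : ℕ => ENNReal.ofReal (exp (t * k)) := measurable_from_nat
    have hfS : Measurable[⨆ p ∈ S, MeasurableSpace.comap (ξ p.1 p.2) inferInstance]
        fun ω => f ω * ENNReal.ofReal (exp (t * ∑ i ∈ Finset.range j, (ξ n i ω : ℝ))) := by
      refine (hf.mono (biSup_mono fun p hp => Or.inl hp) le_rfl).mul ?_
      simp_rw [← Nat.cast_sum]
      exact hexp.comp (Finset.measurable_sum _ fun i hi =>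
        measurable_biSup_comap (X := fun p : ℕ × ℕ => ξ p.1 p.2)
          (show (n, i) ∈ S from Or.inr ⟨rfl, Finset.mem_range.1 hi⟩))
    calc ∫⁻ ω, f ω * ENNReal.ofReal (exp (t * ∑ i ∈ Finset.range (j + 1), (ξ n i ω : ℝ))) ∂P
        = ∫⁻ ω, (f ω * ENNReal.ofReal (exp (t * ∑ i ∈ Finset.range j, (ξ n i ω : ℝ))))
            * ENNReal.ofReal (exp (t * ξ n j ω)) ∂P := by
          refine lintegral_congr fun ω => ?_
          rw [Finset.sum_range_succ, mul_add, exp_add, ENNReal.ofReal_mul (exp_pos _).le,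
            mul_assoc]
      _ = (∫⁻ ω, f ω * ENNReal.ofReal (exp (t * ∑ i ∈ Finset.range j, (ξ n i ω : ℝ))) ∂P)
            * ∫⁻ ω, ENNReal.ofReal (exp (t * ξ n j ω)) ∂P :=
          lintegral_mul_comp_eq_of_iIndepFun (X := fun p : ℕ × ℕ => ξ p.1 p.2)
            (fun p => hZ.measurable_offspring p.1 p.2) hZ.iIndepFun_offspring
            (q := (n, j)) (by simp [S]) hfS hexp
      _ = (∫⁻ ω, f ω ∂P) * offspringMGF μ t ^ (j + 1) := by
          rw [ih, hZ.lintegral_exp_mul_offspring, pow_succ, mul_assoc]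

lemma lintegral_mul_exp_succ (hZ : IsGaltonWatson P μ ξ Z) (n : ℕ) (t : ℝ)
    (φ : ℕ → ℝ≥0∞) :
    ∫⁻ ω, φ (Z n ω) * ENNReal.ofReal (exp (t * Z (n + 1) ω)) ∂P
      = ∫⁻ ω, φ (Z n ω) * offspringMGF μ t ^ Z n ω ∂P := by
  have hZn := hZ.measurable n
  have hξ := hZ.measurable_offspring n
  have hA : ∀ j, MeasurableSet[pastSigma ξ n] (Z n ⁻¹' {j}) := fun j =>
    hZ.measurable_pastSigma n (measurableSet_singleton j)
  calc ∫⁻ ω, φ (Z n ω) * ENNReal.ofReal (exp (t * Z (n + 1) ω)) ∂P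
      = ∫⁻ ω, φ (Z n ω)
          * ENNReal.ofReal (exp (t * ∑ i ∈ Finset.range (Z n ω), (ξ n i ω : ℝ))) ∂P := by
        simp_rw [hZ.succ n, Nat.cast_sum]
    _ = ∑' j, ∫⁻ ω in Z n ⁻¹' {j},
          φ j * ENNReal.ofReal (exp (t * ∑ i ∈ Finset.range j, (ξ n i ω : ℝ))) ∂P :=
        lintegral_comp_eq_tsum_setLIntegral (F := fun j ω =>
          φ j * ENNReal.ofReal (exp (t * ∑ i ∈ Finset.range j, (ξ n i ω : ℝ)))) hZn
          fun j => by fun_prop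
    _ = ∑' j, ∫⁻ ω in Z n ⁻¹' {j}, φ j * offspringMGF μ t ^ j ∂P := by
        refine tsum_congr fun j => ?_
        rw [← lintegral_indicator (hZn (measurableSet_singleton j)),
          ← lintegral_indicator (hZn (measurableSet_singleton j))]
        simp_rw [Set.indicator_mul_left _ (fun _ => φ j)]
        rw [hZ.lintegral_mul_exp_sum (measurable_const.indicator (hA j)),
          lintegral_mul_const _ (measurable_const.indicator (hZn (measurableSet_singleton j)))]
    _ = ∫⁻ ω, φ (Z n ω) * offspringMGF μ t ^ Z n ω ∂P :=
        (lintegral_comp_eq_tsum_setLIntegral hZn fun _ => measurable_const).symm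

variable [IsProbabilityMeasure μ] {d : ℕ} {m : ℝ}

lemma lintegral_exp_add_le (hZ : IsGaltonWatson P μ ξ Z)
    (hsupp : ∀ k : ℕ, d < k → μ {k} = 0) (hmean : ∑' k : ℕ, (k : ℝ) * (μ {k}).toReal = m)
    (n : ℕ) (b : ℝ) {t : ℝ} (ht : |t| * d ≤ 1) :
    ∫⁻ ω, ENNReal.ofReal (exp (b * Z n ω + t * Z (n + 1) ω)) ∂P
      ≤ ∫⁻ ω, ENNReal.ofReal (exp ((b + t * m + d * m * t ^ 2) * Z n ω)) ∂P := by
  have hpow : ∀ k : ℕ, ENNReal.ofReal (exp (b * k))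
      * ENNReal.ofReal (exp (t * m + d * m * t ^ 2)) ^ k
      = ENNReal.ofReal (exp ((b + t * m + d * m * t ^ 2) * k)) := fun k => by
    rw [← ENNReal.ofReal_pow (exp_pos _).le, ← exp_nat_mul,
      ← ENNReal.ofReal_mul (exp_pos _).le, ← exp_add]
    ring_nf
  calc ∫⁻ ω, ENNReal.ofReal (exp (b * Z n ω + t * Z (n + 1) ω)) ∂P
      = ∫⁻ ω, ENNReal.ofReal (exp (b * Z n ω)) * ENNReal.ofReal (exp (t * Z (n + 1) ω)) ∂P := by
        simp_rw [exp_add, ENNReal.ofReal_mul (exp_pos _).le]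
    _ = ∫⁻ ω, ENNReal.ofReal (exp (b * Z n ω)) * offspringMGF μ t ^ Z n ω ∂P :=
        hZ.lintegral_mul_exp_succ n t fun k => ENNReal.ofReal (exp (b * k))
    _ ≤ ∫⁻ ω, ENNReal.ofReal (exp (b * Z n ω))
          * ENNReal.ofReal (exp (t * m + d * m * t ^ 2)) ^ Z n ω ∂P := by
        gcongr
        exact offspringMGF_le hsupp hmean ht
    _ = ∫⁻ ω, ENNReal.ofReal (exp ((b + t * m + d * m * t ^ 2) * Z n ω)) ∂P :=
        lintegral_congr fun ω => hpow (Z n ω)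

lemma lintegral_exp_expWeight_mul_le [IsProbabilityMeasure P] (hZ : IsGaltonWatson P μ ξ Z)
    (hsupp : ∀ k : ℕ, d < k → μ {k} = 0) (hmean : ∑' k : ℕ, (k : ℝ) * (μ {k}).toReal = m)
    (hm : 1 < m) {θ : ℝ} (hθ : 0 ≤ θ) (hθm : 4 * d * m * θ ≤ m - 1) (n : ℕ) :
    ∫⁻ ω, ENNReal.ofReal (exp (expWeight θ (m ^ n)⁻¹ * Z n ω)) ∂P
      ≤ ENNReal.ofReal (exp (2 * θ)) := by
  have hm0 : 0 < m := by linarith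
  have hd0 : (0 : ℝ) ≤ d := Nat.cast_nonneg d
  have hpow_inv : ∀ k, 0 < (m ^ k)⁻¹ ∧ (m ^ k)⁻¹ ≤ 1 := fun k =>
    ⟨by positivity, inv_le_one_of_one_le₀ (one_le_pow₀ hm.le)⟩
  have hd : ∀ k, |expWeight θ (m ^ k)⁻¹| * d ≤ 1 := fun k => by
    obtain ⟨h0, h1⟩ := hpow_inv k
    have h4 : 4 * d * θ ≤ 1 := by nlinarith [mul_nonneg hd0 hθ]
    rw [expWeight, abs_of_nonneg (by positivity)]
    nlinarith [mul_nonneg (mul_nonneg hθ hd0) h0.le]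
  have hstep : ∀ k, expWeight θ (m ^ (k + 1))⁻¹ * m
      + d * m * expWeight θ (m ^ (k + 1))⁻¹ ^ 2 ≤ expWeight θ (m ^ k)⁻¹ := fun k => by
    have hy : m * (m ^ (k + 1))⁻¹ = (m ^ k)⁻¹ := by field_simp; ring
    simpa only [hy] using expWeight_mul_add_sq_le hd0 hθ hm0.le
      (hpow_inv (k + 1)).1.le (hpow_inv (k + 1)).2 (by nlinarith)
  induction n with
  | zero =>
    have h0 : ∀ ω, expWeight θ (m ^ 0)⁻¹ * Z 0 ω = 2 * θ := fun ω => by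
      simp only [expWeight, hZ.zero]; ring
    simp only [h0, lintegral_const, measure_univ, mul_one, le_refl]
  | succ n ih =>
    calc ∫⁻ ω, ENNReal.ofReal (exp (expWeight θ (m ^ (n + 1))⁻¹ * Z (n + 1) ω)) ∂P
        = ∫⁻ ω, ENNReal.ofReal
            (exp (0 * Z n ω + expWeight θ (m ^ (n + 1))⁻¹ * Z (n + 1) ω)) ∂P := by
          simp only [zero_mul, zero_add]
      _ ≤ ∫⁻ ω, ENNReal.ofReal (exp ((0 + expWeight θ (m ^ (n + 1))⁻¹ * m
            + d * m * expWeight θ (m ^ (n + 1))⁻¹ ^ 2) * Z n ω)) ∂P :=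
          hZ.lintegral_exp_add_le hsupp hmean n 0 (hd (n + 1))
      _ ≤ ∫⁻ ω, ENNReal.ofReal (exp (expWeight θ (m ^ n)⁻¹ * Z n ω)) ∂P := by
          gcongr
          linarith [hstep n]
      _ ≤ ENNReal.ofReal (exp (2 * θ)) := ih

lemma lintegral_exp_mul_div_pow_le [IsProbabilityMeasure P] (hZ : IsGaltonWatson P μ ξ Z)
    (hsupp : ∀ k : ℕ, d < k → μ {k} = 0) (hmean : ∑' k : ℕ, (k : ℝ) * (μ {k}).toReal = m)
    (hm : 1 < m) {θ : ℝ} (hθ : 0 ≤ θ) (hθm : 4 * d * m * θ ≤ m - 1) (n : ℕ) :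
    ∫⁻ ω, ENNReal.ofReal (exp (θ * (Z n ω / m ^ n))) ∂P ≤ ENNReal.ofReal (exp (2 * θ)) := by
  have hpow_inv : 0 < (m ^ n)⁻¹ := by have := hm; positivity
  calc ∫⁻ ω, ENNReal.ofReal (exp (θ * (Z n ω / m ^ n))) ∂P
      = ∫⁻ ω, ENNReal.ofReal (exp (θ * (m ^ n)⁻¹ * Z n ω)) ∂P := by
        simp only [div_eq_inv_mul, mul_assoc]
    _ ≤ ∫⁻ ω, ENNReal.ofReal (exp (expWeight θ (m ^ n)⁻¹ * Z n ω)) ∂P := by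
        gcongr
        rw [expWeight]
        nlinarith [mul_nonneg hθ hpow_inv.le]
    _ ≤ ENNReal.ofReal (exp (2 * θ)) :=
        hZ.lintegral_exp_expWeight_mul_le hsupp hmean hm hθ hθm n

lemma lintegral_exp_mul_sub_le (hZ : IsGaltonWatson P μ ξ Z)
    (hsupp : ∀ k : ℕ, d < k → μ {k} = 0) (hmean : ∑' k : ℕ, (k : ℝ) * (μ {k}).toReal = m)
    (hm : 0 < m) (n : ℕ) {t : ℝ} (ht : |t| * d ≤ m ^ (n + 1)) :
    ∫⁻ ω, ENNReal.ofReal (exp (t * (Z (n + 1) ω / m ^ (n + 1) - Z n ω / m ^ n))) ∂P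
      ≤ ∫⁻ ω, ENNReal.ofReal (exp (d * t ^ 2 / m ^ (n + 1) * (Z n ω / m ^ n))) ∂P := by
  set s := t / m ^ (n + 1)
  have hs : |s| * d ≤ 1 := by
    rwa [abs_div, abs_of_pos (pow_pos hm _), div_mul_eq_mul_div, div_le_one (pow_pos hm _)]
  calc ∫⁻ ω, ENNReal.ofReal (exp (t * (Z (n + 1) ω / m ^ (n + 1) - Z n ω / m ^ n))) ∂P
      = ∫⁻ ω, ENNReal.ofReal (exp (-(s * m) * Z n ω + s * Z (n + 1) ω)) ∂P := by
        refine lintegral_congr fun ω => ?_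
        congr 2
        simp only [s, pow_succ]
        field_simp
        ring
    _ ≤ ∫⁻ ω, ENNReal.ofReal (exp ((-(s * m) + s * m + d * m * s ^ 2) * Z n ω)) ∂P :=
        hZ.lintegral_exp_add_le hsupp hmean n _ hs
    _ = ∫⁻ ω, ENNReal.ofReal (exp (d * t ^ 2 / m ^ (n + 1) * (Z n ω / m ^ n))) ∂P := by
        refine lintegral_congr fun ω => ?_
        congr 2
        simp only [s, pow_succ]
        field_simp
        ring

lemma lintegral_exp_mul_sub_le_exp [IsProbabilityMeasure P] (hZ : IsGaltonWatson P μ ξ Z)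
    (hsupp : ∀ k : ℕ, d < k → μ {k} = 0) (hmean : ∑' k : ℕ, (k : ℝ) * (μ {k}).toReal = m)
    (hm : 1 < m) {c : ℝ} (hc : 0 ≤ c) (hcd : 2 * d * c ≤ (m - 1) / m) (n : ℕ) {t : ℝ}
    (ht : |t| ≤ c * √m ^ n) :
    ∫⁻ ω, ENNReal.ofReal (exp (t * (Z (n + 1) ω / m ^ (n + 1) - Z n ω / m ^ n))) ∂P
      ≤ ENNReal.ofReal (exp (2 * (d * c ^ 2 / m))) := by
  have hm0 : 0 < m := by linarith
  have hd0 : (0 : ℝ) ≤ d := Nat.cast_nonneg d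
  have hm1 : 0 ≤ (m - 1) / m ∧ (m - 1) / m ≤ 1 :=
    ⟨div_nonneg (by linarith) hm0.le, by rw [div_le_one hm0]; linarith⟩
  have hsqrt : √m ^ n ≤ m ^ (n + 1) :=
    calc √m ^ n ≤ (√m ^ 2) ^ n :=
          pow_le_pow_left₀ (sqrt_nonneg m) (by nlinarith [one_le_sqrt.2 hm.le]) n
      _ = m ^ n := by rw [sq_sqrt hm0.le]
      _ ≤ m ^ (n + 1) := pow_le_pow_right₀ hm.le n.le_succ
  have htd : |t| * d ≤ m ^ (n + 1) := by
    nlinarith [mul_le_mul_of_nonneg_right ht hd0, pow_nonneg (sqrt_nonneg m) n]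
  have hsq : t ^ 2 ≤ c ^ 2 * m ^ n := by
    rw [← sq_abs, ← sq_sqrt hm0.le, ← pow_mul, mul_comm 2, pow_mul, ← mul_pow]
    exact pow_le_pow_left₀ (abs_nonneg t) ht 2
  have hθ : 4 * d * m * (d * c ^ 2 / m) ≤ m - 1 := by
    have h : 4 * d * m * (d * c ^ 2 / m) = (2 * d * c) ^ 2 := by field_simp; ring
    have h0 : 0 ≤ 2 * d * c := by positivity
    rw [h]
    nlinarith [mul_le_mul hcd hcd h0 hm1.1, div_le_self (by linarith : (0 : ℝ) ≤ m - 1) hm.le]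
  have hcoef : d * t ^ 2 / m ^ (n + 1) ≤ d * c ^ 2 / m := by
    rw [div_le_div_iff₀ (by positivity) hm0, pow_succ m n, ← mul_assoc]
    exact mul_le_mul_of_nonneg_right (by nlinarith [mul_le_mul_of_nonneg_left hsq hd0]) hm0.le
  calc _ ≤ ∫⁻ ω, ENNReal.ofReal (exp (d * t ^ 2 / m ^ (n + 1) * (Z n ω / m ^ n))) ∂P :=
        hZ.lintegral_exp_mul_sub_le hsupp hmean hm0 n htd
    _ ≤ ∫⁻ ω, ENNReal.ofReal (exp (d * c ^ 2 / m * (Z n ω / m ^ n))) ∂P :=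
        lintegral_mono fun ω => ENNReal.ofReal_le_ofReal
          (exp_le_exp.2 (mul_le_mul_of_nonneg_right hcoef (by positivity)))
    _ ≤ ENNReal.ofReal (exp (2 * (d * c ^ 2 / m))) :=
        hZ.lintegral_exp_mul_div_pow_le hsupp hmean hm (by positivity) hθ n

lemma ae_tendsto_div_pow [IsProbabilityMeasure P] (hZ : IsGaltonWatson P μ ξ Z)
    (hsupp : ∀ k : ℕ, d < k → μ {k} = 0) (hmean : ∑' k : ℕ, (k : ℝ) * (μ {k}).toReal = m)
    (hm : 1 < m) (hd : 0 < d) :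
    ∀ᵐ ω ∂P, ∃ L, Tendsto (fun n => (Z n ω : ℝ) / m ^ n) atTop (𝓝 L) := by
  obtain ⟨c, hc, hcd⟩ : ∃ c : ℝ, 0 < c ∧ 2 * d * c = (m - 1) / m :=
    ⟨(m - 1) / (2 * d * m), by have := hm; positivity, by field_simp⟩
  have hsqrt : 1 < √m := lt_sqrt zero_le_one |>.2 (by simpa using hm)
  refine ae_tendsto_of_lintegral_exp_mul_sub_le (r := fun n => c * √m ^ n)
    (hZ.measurable_div_pow m) (fun n => by positivity) ?_ ENNReal.ofReal_ne_top
    (fun n => hZ.lintegral_exp_mul_sub_le_exp hsupp hmean hm hc.le hcd.le n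
      (abs_of_pos (by positivity)).le)
    (fun n => hZ.lintegral_exp_mul_sub_le_exp hsupp hmean hm hc.le hcd.le n
      (by rw [abs_neg, abs_of_pos (by positivity)]))
  simp only [mul_inv, ← inv_pow]
  exact (summable_geometric_of_lt_one (by positivity) (inv_lt_one_of_one_lt₀ hsqrt)).mul_left _

end IsGaltonWatson

end GaltonWatson

/-- For every real θ with 0 ≤ θ < ((log 3 − 1)/40)·(m−1)/(m·d), the a.s. limit
W_∞ = limsup W_n has a finite exponential moment: E[exp(θ·W_∞)] < ∞. -/
theorem gw_Winf_exponential_moment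
    {Ω : Type*} [MeasurableSpace Ω] (P : MeasureTheory.Measure Ω)
    [MeasureTheory.IsProbabilityMeasure P]
    (d : ℕ) (hd : 2 ≤ d) (m : ℝ) (hm : 1 < m)
    (μ : MeasureTheory.Measure ℕ) [MeasureTheory.IsProbabilityMeasure μ]
    (hsupp : ∀ k : ℕ, d < k → μ {k} = 0)
    (hmean : ∑' k : ℕ, (k : ℝ) * (μ {k}).toReal = m)
    (ξ : ℕ → ℕ → Ω → ℕ)
    (hmeas : ∀ n i, Measurable (ξ n i))
    (hlaw : ∀ n i, MeasureTheory.Measure.map (ξ n i) P = μ)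
    (hindep : ProbabilityTheory.iIndepFun
      (fun p : ℕ × ℕ => ξ p.1 p.2) P)
    (Z : ℕ → Ω → ℕ) (hZ0 : ∀ ω, Z 0 ω = 1)
    (hZsucc : ∀ n ω, Z (n + 1) ω = ∑ i ∈ Finset.range (Z n ω), ξ n i ω)
    (W : ℕ → Ω → ℝ) (hW : ∀ n ω, W n ω = (Z n ω : ℝ) / m ^ n)
    (Winf : Ω → ℝ)
    (hWinf : ∀ ω, Winf ω = Filter.limsup (fun n => W n ω) Filter.atTop)
    (θ : ℝ) (hθ0 : 0 ≤ θ)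
    (hθ : θ < (Real.log 3 - 1) / 40 * (m - 1) / (m * d)) :
    MeasureTheory.Integrable (fun ω => Real.exp (θ * Winf ω)) P := by
  have hZ : GaltonWatson.IsGaltonWatson P μ ξ Z := ⟨hmeas, hlaw, hindep, hZ0, hZsucc⟩
  obtain rfl : W = fun n ω => (Z n ω : ℝ) / m ^ n := funext fun n => funext (hW n)
  have hθm : 4 * d * m * θ ≤ m - 1 := by
    have hlog : log 3 - 1 ≤ 10 := by
      linarith [log_le_sub_one_of_pos (by norm_num : (0 : ℝ) < 3)]
    rw [lt_div_iff₀ (mul_pos (by linarith) (by exact_mod_cast (by omega : 0 < d)))] at hθ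
    nlinarith
  have hconv : ∀ᵐ ω ∂P, Tendsto (fun n => (Z n ω : ℝ) / m ^ n) atTop (𝓝 (Winf ω)) := by
    filter_upwards [hZ.ae_tendsto_div_pow hsupp hmean hm (by omega)] with ω ⟨L, hL⟩
    rwa [hWinf, hL.limsup_eq]
  refine integrable_of_tendsto_of_lintegral_enorm_le
    (G := fun n ω => exp (θ * ((Z n ω : ℝ) / m ^ n))) (C := ENNReal.ofReal (exp (2 * θ)))
    (fun n => (measurable_exp.comp ((hZ.measurable_div_pow m n).const_mul θ)).aestronglyMeasurable)
    (hconv.mono fun ω h => (continuous_exp.tendsto _).comp (h.const_mul θ))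
    ENNReal.ofReal_ne_top fun n => ?_
  simp_rw [Real.enorm_eq_ofReal (exp_pos _).le]
  exact hZ.lintegral_exp_mul_div_pow_le hsupp hmean hm hθ0 hθm n
end

section
/- The martingale (W_n)_{n≥0} converges almost surely and in L² to a nonnegative random variable W_∞ with E[W_∞] = 1. -/
/-!
Truncating the offspring numbers at `d` changes them only on a null set, and afterwards every
generation is bounded, `Z n ≤ d ^ n`, so all moments below are finite. Writing
`Z (n + 1) = ∑ i < d ^ n, ξ n i * 1{i < Z n}` and using that generation `n` is independent of the
σ-algebra `F n` of the earlier generations gives, for `F n`-measurable `Y` and `s = E[ξ²]`,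
`E[Z (n + 1) Y] = m E[Z n Y]` and `E[Z (n + 1)²] = m² E[Z n²] + (s - m²) E[Z n]`.
The first identity makes `W` a nonnegative martingale with `E[W n] = 1`, hence `W` converges a.s.
by the martingale convergence theorem. Both together give the orthogonality of the increments,
`E[(W n - W N)²] = c (m⁻ᴺ - m⁻ⁿ)` with `c = (s - m²) / (m (m - 1))`, and Fatou's lemma turns this
into `E[(W N - W∞)²] ≤ c m⁻ᴺ`. This is the L² convergence, and `(E[W∞] - 1)² ≤ E[(W N - W∞)²]`
gives `E[W∞] = 1`.
-/

open MeasureTheory ProbabilityTheory Filter Topology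
open scoped ENNReal

theorem ProbabilityTheory.iIndepFun.integral_comp_mul_eq {Ω ι β : Type*} [MeasurableSpace Ω]
    {P : Measure Ω} {mβ : MeasurableSpace β} {f : ι → Ω → β} (hf : ∀ i, Measurable (f i))
    (hindep : iIndepFun f P) {S : Set ι} {i : ι} (hi : i ∉ S) {g : β → ℝ} (hg : Measurable g)
    {Y : Ω → ℝ} (hY : Measurable[⨆ j ∈ S, mβ.comap (f j)] Y) :
    ∫ ω, g (f i ω) * Y ω ∂P = (∫ ω, g (f i ω) ∂P) * ∫ ω, Y ω ∂P := by
  have h_indep := indep_biSup_compl (fun j => (hf j).comap_le) hindep {i}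
  rw [iSup_singleton] at h_indep
  have hS : S ⊆ {i}ᶜ := fun j hj hji => hi (hji ▸ hj)
  have hgf : IndepFun (fun ω => g (f i ω)) Y P :=
    indep_of_indep_of_le_left (indep_of_indep_of_le_right h_indep
      ((measurable_iff_comap_le.1 hY).trans (biSup_mono hS)))
      (measurable_iff_comap_le.1 (hg.comp (comap_measurable (f i))))
  exact hgf.integral_mul_eq_mul_integral (hg.comp (hf i)).aestronglyMeasurable
    (hY.mono (iSup₂_le fun j _ => (hf j).comap_le) le_rfl).aestronglyMeasurable

theorem Finset.sum_range_mul_ite_lt {R : Type*} [NonAssocSemiring R] {K M : ℕ} (h : K ≤ M)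
    (f : ℕ → R) :
    ∑ i ∈ Finset.range M, f i * (if i < K then 1 else 0) = ∑ i ∈ Finset.range K, f i := by
  rw [← Finset.sum_range_add_sum_Ico _ h, Finset.sum_eq_zero (s := Finset.Ico K M) fun i hi => by
    rw [if_neg (Finset.mem_Ico.1 hi).1.not_gt, mul_zero], add_zero]
  exact Finset.sum_congr rfl fun i hi => by rw [if_pos (Finset.mem_range.1 hi), mul_one]

theorem MeasureTheory.integral_le_of_tendsto_ae_of_nonneg {Ω : Type*} [MeasurableSpace Ω]
    {P : Measure Ω} {F : ℕ → Ω → ℝ} {G : Ω → ℝ} {L : ℝ} (hF : ∀ n, Integrable (F n) P)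
    (hF0 : ∀ n, 0 ≤ᵐ[P] F n) (hFG : ∀ᵐ ω ∂P, Tendsto (F · ω) atTop (𝓝 (G ω)))
    (hL : Tendsto (fun n => ∫ ω, F n ω ∂P) atTop (𝓝 L)) :
    Integrable G P ∧ ∫ ω, G ω ∂P ≤ L := by
  have hGm : AEStronglyMeasurable G P :=
    aestronglyMeasurable_of_tendsto_ae atTop (fun n => (hF n).1) hFG
  have hG0 : 0 ≤ᵐ[P] G := by
    filter_upwards [hFG, ae_all_iff.2 hF0] with ω hω hω0 using ge_of_tendsto' hω hω0
  have hL0 : 0 ≤ L := ge_of_tendsto' hL fun n => integral_nonneg_of_ae (hF0 n)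
  have hfatou : ∫⁻ ω, ENNReal.ofReal (G ω) ∂P ≤ ENNReal.ofReal L :=
    calc ∫⁻ ω, ENNReal.ofReal (G ω) ∂P
        = ∫⁻ ω, liminf (fun n => ENNReal.ofReal (F n ω)) atTop ∂P := by
          refine lintegral_congr_ae ?_
          filter_upwards [hFG] with ω hω using ((ENNReal.tendsto_ofReal hω).liminf_eq).symm
      _ ≤ liminf (fun n => ∫⁻ ω, ENNReal.ofReal (F n ω) ∂P) atTop :=
          lintegral_liminf_le' fun n => (hF n).1.aemeasurable.ennreal_ofReal
      _ = ENNReal.ofReal L := by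
          refine ((ENNReal.tendsto_ofReal hL).congr fun n => ?_).liminf_eq
          exact ofReal_integral_eq_lintegral_ofReal (hF n) (hF0 n)
  refine ⟨⟨hGm, (hasFiniteIntegral_iff_ofReal hG0).2 (hfatou.trans_lt ENNReal.ofReal_lt_top)⟩, ?_⟩
  rw [integral_eq_lintegral_of_nonneg_ae hG0 hGm]
  exact ENNReal.toReal_le_of_le_ofReal hL0 hfatou

theorem MeasureTheory.sq_integral_le_integral_sq {Ω : Type*} [MeasurableSpace Ω] {P : Measure Ω}
    [IsProbabilityMeasure P] {X : Ω → ℝ} (hX : MemLp X 2 P) :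
    (∫ ω, X ω ∂P) ^ 2 ≤ ∫ ω, X ω ^ 2 ∂P := by
  have h := variance_nonneg X P
  rw [variance_eq_sub hX] at h
  simpa using h

theorem tendsto_const_mul_inv_pow_atTop {m : ℝ} (hm : 1 < m) (c : ℝ) :
    Tendsto (fun n : ℕ => c * (m⁻¹) ^ n) atTop (𝓝 0) := by
  simpa only [mul_zero] using (tendsto_pow_atTop_nhds_zero_of_lt_one (by positivity)
    (inv_lt_one_of_one_lt₀ hm)).const_mul c

namespace GaltonWatson

variable {Ω : Type*} {ξ : ℕ → ℕ → Ω → ℕ}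

def gwProcess (ξ : ℕ → ℕ → Ω → ℕ) : ℕ → Ω → ℕ
  | 0 => fun _ => 1
  | n + 1 => fun ω => ∑ i ∈ Finset.range (gwProcess ξ n ω), ξ n i ω

def gwAlive (ξ : ℕ → ℕ → Ω → ℕ) (n i : ℕ) (ω : Ω) : ℝ :=
  if i < gwProcess ξ n ω then 1 else 0

theorem gwAlive_mul_self (n i : ℕ) (ω : Ω) :
    gwAlive ξ n i ω * gwAlive ξ n i ω = gwAlive ξ n i ω := by
  unfold gwAlive; split_ifs <;> simp

theorem abs_gwAlive_le_one (n i : ℕ) (ω : Ω) : |gwAlive ξ n i ω| ≤ 1 := by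
  unfold gwAlive; split_ifs <;> simp

theorem sum_gwAlive {n M : ℕ} {ω : Ω} (h : gwProcess ξ n ω ≤ M) :
    ∑ i ∈ Finset.range M, gwAlive ξ n i ω = gwProcess ξ n ω := by
  simpa only [gwAlive, one_mul, Finset.sum_const, Finset.card_range, nsmul_eq_mul, mul_one] using
    Finset.sum_range_mul_ite_lt h (fun _ => (1 : ℝ))

theorem gwProcess_succ_eq_sum {n M : ℕ} {ω : Ω} (h : gwProcess ξ n ω ≤ M) :
    (gwProcess ξ (n + 1) ω : ℝ) = ∑ i ∈ Finset.range M, ξ n i ω * gwAlive ξ n i ω := by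
  simp only [gwAlive]
  rw [Finset.sum_range_mul_ite_lt h]
  simp [gwProcess]

theorem eq_gwProcess {Z : ℕ → Ω → ℕ} (h0 : ∀ ω, Z 0 ω = 1)
    (hsucc : ∀ n ω, Z (n + 1) ω = ∑ i ∈ Finset.range (Z n ω), ξ n i ω) (n : ℕ) (ω : Ω) :
    Z n ω = gwProcess ξ n ω := by
  induction n with
  | zero => exact h0 ω
  | succ n ih => rw [hsucc, ih]; rfl

theorem gwProcess_congr {ξ' : ℕ → ℕ → Ω → ℕ} {ω : Ω} (h : ∀ n i, ξ n i ω = ξ' n i ω) (n : ℕ) :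
    gwProcess ξ n ω = gwProcess ξ' n ω := by
  induction n with
  | zero => rfl
  | succ n ih => simp only [gwProcess, ih, h]

theorem gwProcess_le_pow {d : ℕ} (hbdd : ∀ n i ω, ξ n i ω ≤ d) (n : ℕ) (ω : Ω) :
    gwProcess ξ n ω ≤ d ^ n := by
  induction n with
  | zero => simp [gwProcess]
  | succ n ih =>
    calc gwProcess ξ (n + 1) ω ≤ ∑ _i ∈ Finset.range (gwProcess ξ n ω), d :=
          Finset.sum_le_sum fun i _ => hbdd n i ω
      _ ≤ d ^ n * d := by rw [Finset.sum_const, Finset.card_range, smul_eq_mul]; gcongr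
      _ = d ^ (n + 1) := (pow_succ d n).symm

noncomputable def gwNormalized (ξ : ℕ → ℕ → Ω → ℕ) (m : ℝ) (n : ℕ) (ω : Ω) : ℝ :=
  gwProcess ξ n ω / m ^ n

variable [m0 : MeasurableSpace Ω] {P : Measure Ω}

def gwFiltration (ξ : ℕ → ℕ → Ω → ℕ) (hmeas : ∀ n i, Measurable (ξ n i)) : Filtration ℕ m0 where
  seq n := ⨆ p ∈ {p : ℕ × ℕ | p.1 < n}, MeasurableSpace.comap (ξ p.1 p.2) inferInstance
  mono' _ _ h := biSup_mono fun _ hp => lt_of_lt_of_le hp h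
  le' _ := iSup₂_le fun p _ => (hmeas p.1 p.2).comap_le

section Filtration

variable (hmeas : ∀ n i, Measurable (ξ n i))
include hmeas

theorem measurable_offspring_gwFiltration {n k : ℕ} (h : n < k) (i : ℕ) :
    Measurable[gwFiltration ξ hmeas k] (ξ n i) :=
  measurable_iff_comap_le.2 <| le_iSup₂_of_le (n, i) h le_rfl

theorem measurable_gwProcess (n : ℕ) : Measurable[gwFiltration ξ hmeas n] (gwProcess ξ n) := by
  induction n with
  | zero => exact measurable_const
  | succ n ih =>
    have hsum : Measurable[@Prod.instMeasurableSpace ℕ Ω _ (gwFiltration ξ hmeas (n + 1))]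
        fun p : ℕ × Ω => ∑ i ∈ Finset.range p.1, ξ n i p.2 :=
      measurable_from_prod_countable_right fun k => by
        dsimp only
        exact Finset.measurable_sum _ fun i _ =>
          measurable_offspring_gwFiltration hmeas n.lt_succ_self i
    exact hsum.comp ((ih.mono ((gwFiltration ξ hmeas).mono n.le_succ) le_rfl).prodMk measurable_id)

theorem measurable_gwAlive (n i : ℕ) : Measurable[gwFiltration ξ hmeas n] (gwAlive ξ n i) :=
  Measurable.ite (measurableSet_lt measurable_const (measurable_gwProcess hmeas n))
    measurable_const measurable_const

theorem memLp_top_gwAlive (n i : ℕ) : MemLp (gwAlive ξ n i) ∞ P :=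
  memLp_top_of_bound ((measurable_gwAlive hmeas n i).mono ((gwFiltration ξ hmeas).le n)
    le_rfl).aestronglyMeasurable 1 (ae_of_all _ fun ω => abs_gwAlive_le_one n i ω)

theorem memLp_top_offspring {d : ℕ} (hbdd : ∀ n i ω, ξ n i ω ≤ d) (n i : ℕ) :
    MemLp (fun ω => (ξ n i ω : ℝ)) ∞ P :=
  memLp_top_of_bound (measurable_from_top.comp (hmeas n i)).aestronglyMeasurable d
    (ae_of_all _ fun ω => by simpa using hbdd n i ω)

theorem memLp_top_gwProcess {d : ℕ} (hbdd : ∀ n i ω, ξ n i ω ≤ d) (n : ℕ) :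
    MemLp (fun ω => (gwProcess ξ n ω : ℝ)) ∞ P :=
  memLp_top_of_bound (measurable_from_top.comp ((measurable_gwProcess hmeas n).mono
    ((gwFiltration ξ hmeas).le n) le_rfl)).aestronglyMeasurable (d ^ n)
    (ae_of_all _ fun ω => by simpa using (Nat.cast_le (α := ℝ)).2 (gwProcess_le_pow hbdd n ω))

theorem memLp_top_gwNormalized {d : ℕ} (hbdd : ∀ n i ω, ξ n i ω ≤ d) (m : ℝ) (n : ℕ) :
    MemLp (gwNormalized ξ m n) ∞ P := by
  convert (memLp_top_gwProcess hmeas hbdd n).mul_const (m ^ n)⁻¹ using 1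
  exact funext fun ω => div_eq_mul_inv _ _

variable (hindep : iIndepFun (fun p : ℕ × ℕ => ξ p.1 p.2) P)
include hindep

theorem integral_offspring_mul (g : ℕ → ℝ) {n : ℕ} {Y : Ω → ℝ}
    (hY : Measurable[gwFiltration ξ hmeas n] Y) (i : ℕ) :
    ∫ ω, g (ξ n i ω) * Y ω ∂P = (∫ ω, g (ξ n i ω) ∂P) * ∫ ω, Y ω ∂P :=
  hindep.integral_comp_mul_eq (f := fun p : ℕ × ℕ => ξ p.1 p.2) (fun p => hmeas p.1 p.2)
    (i := (n, i)) (S := {p | p.1 < n}) (by simp) (g := g) measurable_from_top (Y := Y) hY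

theorem integral_offspring_mul_offspring_mul {n i j : ℕ} (hij : i ≠ j) {Y : Ω → ℝ}
    (hY : Measurable[gwFiltration ξ hmeas n] Y) :
    ∫ ω, (ξ n i ω : ℝ) * (ξ n j ω * Y ω) ∂P
      = (∫ ω, (ξ n i ω : ℝ) ∂P) * (∫ ω, (ξ n j ω : ℝ) ∂P) * ∫ ω, Y ω ∂P := by
  have hjY : Measurable[⨆ p ∈ insert (n, j) {p : ℕ × ℕ | p.1 < n},
      MeasurableSpace.comap (ξ p.1 p.2) inferInstance] fun ω => (ξ n j ω : ℝ) * Y ω := by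
    rw [iSup_insert]
    exact ((measurable_from_top.comp (comap_measurable _)).mono le_sup_left le_rfl).mul
      (hY.mono le_sup_right le_rfl)
  rw [hindep.integral_comp_mul_eq (f := fun p : ℕ × ℕ => ξ p.1 p.2) (fun p => hmeas p.1 p.2)
      (i := (n, i)) (by simp [hij]) (g := Nat.cast) measurable_from_top hjY,
    integral_offspring_mul hmeas hindep _ hY, mul_assoc]

section Moments

variable {m : ℝ} (hmean : ∀ n i, ∫ ω, (ξ n i ω : ℝ) ∂P = m)
include hmean

theorem integral_offspring_gwAlive_mul_offspring_gwAlive {s : ℝ}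
    (hsq : ∀ n i, ∫ ω, (ξ n i ω : ℝ) ^ 2 ∂P = s) (n i j : ℕ) :
    ∫ ω, (ξ n i ω * gwAlive ξ n i ω) * (ξ n j ω * gwAlive ξ n j ω) ∂P
      = ∫ ω, m ^ 2 * (gwAlive ξ n i ω * gwAlive ξ n j ω)
          + (if i = j then (s - m ^ 2) * gwAlive ξ n i ω else 0) ∂P := by
  rcases eq_or_ne i j with rfl | hij
  · calc ∫ ω, (ξ n i ω * gwAlive ξ n i ω) * (ξ n i ω * gwAlive ξ n i ω) ∂P
        = ∫ ω, (ξ n i ω : ℝ) ^ 2 * gwAlive ξ n i ω ∂P := by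
          congr 1 with ω
          linear_combination (ξ n i ω : ℝ) ^ 2 * gwAlive_mul_self n i ω
      _ = ∫ ω, s * gwAlive ξ n i ω ∂P := by
          rw [integral_offspring_mul hmeas hindep (· ^ 2) (measurable_gwAlive hmeas n i), hsq,
            integral_const_mul]
      _ = _ := by
          congr 1 with ω
          rw [if_pos rfl]
          linear_combination -m ^ 2 * gwAlive_mul_self n i ω
  · calc ∫ ω, (ξ n i ω * gwAlive ξ n i ω) * (ξ n j ω * gwAlive ξ n j ω) ∂P
        = ∫ ω, (ξ n i ω : ℝ) * (ξ n j ω * (gwAlive ξ n i ω * gwAlive ξ n j ω)) ∂P := by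
          congr 1 with ω
          ring
      _ = _ := by
          rw [integral_offspring_mul_offspring_mul hmeas hindep hij
              (Y := fun ω => gwAlive ξ n i ω * gwAlive ξ n j ω)
              ((measurable_gwAlive hmeas n i).mul (measurable_gwAlive hmeas n j)),
            hmean, hmean, ← sq, ← integral_const_mul]
          simp only [if_neg hij, add_zero]

variable {d : ℕ} (hbdd : ∀ n i ω, ξ n i ω ≤ d)
include hbdd

theorem integral_gwProcess_succ_mul {n : ℕ} {Y : Ω → ℝ}
    (hY : Measurable[gwFiltration ξ hmeas n] Y) (hYi : Integrable Y P) :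
    ∫ ω, (gwProcess ξ (n + 1) ω : ℝ) * Y ω ∂P = m * ∫ ω, (gwProcess ξ n ω : ℝ) * Y ω ∂P := by
  have hZ := fun ω => gwProcess_le_pow hbdd n ω
  have huY : ∀ i, Integrable (fun ω => gwAlive ξ n i ω * Y ω) P := fun i =>
    hYi.mul_of_top_right (memLp_top_gwAlive hmeas n i)
  calc ∫ ω, (gwProcess ξ (n + 1) ω : ℝ) * Y ω ∂P
      = ∫ ω, ∑ i ∈ Finset.range (d ^ n), (ξ n i ω : ℝ) * (gwAlive ξ n i ω * Y ω) ∂P := by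
        simp_rw [gwProcess_succ_eq_sum (hZ _), Finset.sum_mul, mul_assoc]
    _ = ∑ i ∈ Finset.range (d ^ n), m * ∫ ω, gwAlive ξ n i ω * Y ω ∂P := by
        refine (integral_finsetSum _ fun i _ => ?_).trans (Finset.sum_congr rfl fun i _ => ?_)
        · exact (huY i).mul_of_top_right (memLp_top_offspring hmeas hbdd n i)
        rw [integral_offspring_mul hmeas hindep Nat.cast (Y := fun ω => gwAlive ξ n i ω * Y ω)
          ((measurable_gwAlive hmeas n i).mul hY) i, hmean]
    _ = m * ∫ ω, (gwProcess ξ n ω : ℝ) * Y ω ∂P := by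
        rw [← Finset.mul_sum, ← integral_finsetSum _ fun i _ => huY i]
        simp_rw [← Finset.sum_mul, sum_gwAlive (hZ _)]

theorem integral_gwProcess_succ_sq [IsFiniteMeasure P] {s : ℝ}
    (hsq : ∀ n i, ∫ ω, (ξ n i ω : ℝ) ^ 2 ∂P = s) (n : ℕ) :
    ∫ ω, (gwProcess ξ (n + 1) ω : ℝ) ^ 2 ∂P
      = m ^ 2 * ∫ ω, (gwProcess ξ n ω : ℝ) ^ 2 ∂P
        + (s - m ^ 2) * ∫ ω, (gwProcess ξ n ω : ℝ) ∂P := by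
  have hZ := fun ω => gwProcess_le_pow hbdd n ω
  have hX := memLp_top_offspring (P := P) hmeas hbdd n
  have hu := memLp_top_gwAlive (P := P) hmeas n
  have hZmem := memLp_top_gwProcess (P := P) hmeas hbdd n
  set T : ℕ → ℕ → Ω → ℝ := fun i j ω =>
    (ξ n i ω * gwAlive ξ n i ω) * (ξ n j ω * gwAlive ξ n j ω)
  set V : ℕ → ℕ → Ω → ℝ := fun i j ω => m ^ 2 * (gwAlive ξ n i ω * gwAlive ξ n j ω)
    + if i = j then (s - m ^ 2) * gwAlive ξ n i ω else 0
  have hT : ∀ i j, Integrable (T i j) P := fun i j =>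
    (((hu j).mul' (r := ∞) (hX j)).mul' (r := ∞) ((hu i).mul' (r := ∞) (hX i))).integrable le_top
  have hV : ∀ i j, Integrable (V i j) P := fun i j => by
    refine (((hu j).mul' (r := ∞) (hu i)).integrable le_top).const_mul _ |>.add ?_
    split_ifs
    · exact ((hu i).integrable le_top).const_mul _
    · exact integrable_zero _ _ _
  calc ∫ ω, (gwProcess ξ (n + 1) ω : ℝ) ^ 2 ∂P
      = ∫ ω, ∑ i ∈ Finset.range (d ^ n), ∑ j ∈ Finset.range (d ^ n), T i j ω ∂P := by
        simp_rw [gwProcess_succ_eq_sum (hZ _), sq, Finset.sum_mul_sum, T]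
    _ = ∫ ω, ∑ i ∈ Finset.range (d ^ n), ∑ j ∈ Finset.range (d ^ n), V i j ω ∂P := by
        rw [integral_finsetSum _ fun i _ => integrable_finsetSum _ fun j _ => hT i j,
          integral_finsetSum _ fun i _ => integrable_finsetSum _ fun j _ => hV i j]
        refine Finset.sum_congr rfl fun i _ => ?_
        rw [integral_finsetSum _ fun j _ => hT i j, integral_finsetSum _ fun j _ => hV i j]
        exact Finset.sum_congr rfl fun j _ =>
          integral_offspring_gwAlive_mul_offspring_gwAlive hmeas hindep hmean hsq n i j
    _ = ∫ ω, m ^ 2 * (gwProcess ξ n ω : ℝ) ^ 2 + (s - m ^ 2) * gwProcess ξ n ω ∂P := by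
        congr 1 with ω
        simp only [V, Finset.sum_add_distrib, Finset.sum_ite_eq, Finset.sum_ite_mem,
          Finset.inter_self, ← Finset.mul_sum, ← Finset.sum_mul, sum_gwAlive (hZ ω), sq]
    _ = _ := by
        rw [integral_add, integral_const_mul (μ := P), integral_const_mul (μ := P)]
        · refine Integrable.const_mul ?_ _
          simpa only [sq] using (hZmem.mul' (r := ∞) hZmem).integrable le_top
        · exact (hZmem.integrable le_top).const_mul _

section Normalized

variable (hm : m ≠ 0)
include hm

theorem integral_gwNormalized_succ_mul {n : ℕ} {Y : Ω → ℝ}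
    (hY : Measurable[gwFiltration ξ hmeas n] Y) (hYi : Integrable Y P) :
    ∫ ω, gwNormalized ξ m (n + 1) ω * Y ω ∂P = ∫ ω, gwNormalized ξ m n ω * Y ω ∂P := by
  simp only [gwNormalized, div_mul_eq_mul_div, integral_div,
    integral_gwProcess_succ_mul hmeas hindep hmean hbdd hY hYi, pow_succ]
  field_simp

theorem integral_gwNormalized_mul_of_le {N n : ℕ} (hNn : N ≤ n) {Y : Ω → ℝ}
    (hY : Measurable[gwFiltration ξ hmeas N] Y) (hYi : Integrable Y P) :
    ∫ ω, gwNormalized ξ m n ω * Y ω ∂P = ∫ ω, gwNormalized ξ m N ω * Y ω ∂P := by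
  induction n, hNn using Nat.le_induction with
  | base => rfl
  | succ n hNn ih =>
    rw [integral_gwNormalized_succ_mul hmeas hindep hmean hbdd hm
      (hY.mono ((gwFiltration ξ hmeas).mono hNn) le_rfl) hYi, ih]

theorem integral_gwNormalized [IsProbabilityMeasure P] (n : ℕ) :
    ∫ ω, gwNormalized ξ m n ω ∂P = 1 := by
  simpa [gwNormalized, gwProcess] using integral_gwNormalized_mul_of_le hmeas hindep hmean hbdd
    hm (Nat.zero_le n) (Y := fun _ => 1) measurable_const (integrable_const 1)

theorem martingale_gwNormalized [IsFiniteMeasure P] :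
    Martingale (gwNormalized ξ m) (gwFiltration ξ hmeas) P := by
  refine martingale_of_setIntegral_eq_succ (fun n => ?_) (fun n => ?_) fun n s hs => ?_
  · exact ((measurable_from_top.comp (measurable_gwProcess hmeas n)).div_const _).stronglyMeasurable
  · exact (memLp_top_gwNormalized hmeas hbdd m n).integrable le_top
  have hs0 : MeasurableSet s := (gwFiltration ξ hmeas).le n s hs
  have hsetIntegral : ∀ f : Ω → ℝ,
      ∫ ω in s, f ω ∂P = ∫ ω, f ω * s.indicator (fun _ => (1 : ℝ)) ω ∂P := fun f => by
    rw [← integral_indicator hs0]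
    congr 1 with ω
    by_cases hω : ω ∈ s <;> simp [hω]
  have hind : Measurable[gwFiltration ξ hmeas n] (s.indicator fun _ => (1 : ℝ)) :=
    measurable_const.indicator hs
  rw [hsetIntegral, hsetIntegral, integral_gwNormalized_succ_mul hmeas hindep hmean hbdd hm
    hind ((integrable_const 1).indicator hs0)]

theorem integral_gwNormalized_sq [IsProbabilityMeasure P] {s : ℝ}
    (hsq : ∀ n i, ∫ ω, (ξ n i ω : ℝ) ^ 2 ∂P = s) (hm1 : m ≠ 1) (n : ℕ) :
    ∫ ω, gwNormalized ξ m n ω ^ 2 ∂P = 1 + (s - m ^ 2) / (m * (m - 1)) * (1 - (m⁻¹) ^ n) := by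
  induction n with
  | zero => simp [gwNormalized, gwProcess]
  | succ n ih =>
    have hZ : ∫ ω, (gwProcess ξ n ω : ℝ) ∂P = m ^ n := by
      have h := integral_gwNormalized hmeas hindep hmean hbdd hm (P := P) n
      simp only [gwNormalized] at h
      rwa [integral_div, div_eq_one_iff_eq (pow_ne_zero n hm)] at h
    simp only [gwNormalized, div_pow, integral_div] at ih ⊢
    rw [div_eq_iff (by positivity)] at ih
    rw [integral_gwProcess_succ_sq hmeas hindep hmean hbdd hsq, ih, hZ]
    have hm1' : m - 1 ≠ 0 := sub_ne_zero.2 hm1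
    simp only [inv_pow]
    field_simp
    ring

theorem integral_gwNormalized_sub_sq [IsProbabilityMeasure P] {s : ℝ}
    (hsq : ∀ n i, ∫ ω, (ξ n i ω : ℝ) ^ 2 ∂P = s) (hm1 : m ≠ 1) {N n : ℕ} (hNn : N ≤ n) :
    ∫ ω, (gwNormalized ξ m n ω - gwNormalized ξ m N ω) ^ 2 ∂P
      = (s - m ^ 2) / (m * (m - 1)) * ((m⁻¹) ^ N - (m⁻¹) ^ n) := by
  have hW := memLp_top_gwNormalized (P := P) hmeas hbdd m
  have hint : ∀ k l, Integrable (fun ω => gwNormalized ξ m k ω * gwNormalized ξ m l ω) P :=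
    fun k l => ((hW l).mul' (r := ∞) (hW k)).integrable le_top
  have hcross := integral_gwNormalized_mul_of_le hmeas hindep hmean hbdd hm hNn
    (Y := gwNormalized ξ m N)
    ((measurable_from_top.comp (measurable_gwProcess hmeas N)).div_const _)
    ((hW N).integrable le_top)
  calc ∫ ω, (gwNormalized ξ m n ω - gwNormalized ξ m N ω) ^ 2 ∂P
      = ∫ ω, (gwNormalized ξ m n ω * gwNormalized ξ m n ω
          - gwNormalized ξ m N ω * gwNormalized ξ m N ω)
          - 2 * (gwNormalized ξ m n ω * gwNormalized ξ m N ω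
            - gwNormalized ξ m N ω * gwNormalized ξ m N ω) ∂P := by
        congr 1 with ω
        ring
    _ = ∫ ω, gwNormalized ξ m n ω ^ 2 ∂P - ∫ ω, gwNormalized ξ m N ω ^ 2 ∂P := by
        rw [integral_sub ?_ ?_, integral_const_mul, integral_sub (hint n N) (hint N N), hcross,
          integral_sub (hint n n) (hint N N)]
        · simp only [sq]
          ring
        · exact (hint n n).sub (hint N N)
        · exact ((hint n N).sub (hint N N)).const_mul 2
    _ = _ := by
        rw [integral_gwNormalized_sq hmeas hindep hmean hbdd hm hsq hm1,
          integral_gwNormalized_sq hmeas hindep hmean hbdd hm hsq hm1]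
        ring

end Normalized

section Limit

variable [IsProbabilityMeasure P] (hm1 : 1 < m)
include hm1

theorem ae_exists_tendsto_gwNormalized :
    ∀ᵐ ω ∂P, ∃ c, Tendsto (fun n => gwNormalized ξ m n ω) atTop (𝓝 c) := by
  refine (martingale_gwNormalized hmeas hindep hmean hbdd (by positivity)).submartingale
    |>.exists_ae_tendsto_of_bdd (R := 1) fun n => ?_
  have hW := (memLp_top_gwNormalized (P := P) hmeas hbdd m n).integrable le_top
  have hW0 : ∀ ω, 0 ≤ gwNormalized ξ m n ω := fun ω => by
    unfold gwNormalized
    positivity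
  rw [eLpNorm_one_eq_lintegral_enorm, ← ofReal_integral_norm_eq_lintegral_enorm hW]
  simp_rw [Real.norm_of_nonneg (hW0 _),
    integral_gwNormalized hmeas hindep hmean hbdd (by positivity : m ≠ 0)]
  simp

variable {s : ℝ} (hsq : ∀ n i, ∫ ω, (ξ n i ω : ℝ) ^ 2 ∂P = s) {G : Ω → ℝ}
  (hG : ∀ᵐ ω ∂P, Tendsto (fun n => gwNormalized ξ m n ω) atTop (𝓝 (G ω)))
include hsq hG

theorem integral_sq_sub_le_of_tendsto (N : ℕ) :
    Integrable (fun ω => (gwNormalized ξ m N ω - G ω) ^ 2) P ∧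
      ∫ ω, (gwNormalized ξ m N ω - G ω) ^ 2 ∂P ≤ (s - m ^ 2) / (m * (m - 1)) * (m⁻¹) ^ N := by
  have hW := memLp_top_gwNormalized (P := P) hmeas hbdd m
  refine integral_le_of_tendsto_ae_of_nonneg
    (F := fun n ω => (gwNormalized ξ m N ω - gwNormalized ξ m n ω) ^ 2)
    (fun n => (((hW N).sub (hW n)).mono_exponent le_top).integrable_sq)
    (fun n => ae_of_all _ fun ω => sq_nonneg _) ?_ ?_
  · filter_upwards [hG] with ω hω using (tendsto_const_nhds.sub hω).pow 2
  · have hlim := tendsto_const_nhds (x := (s - m ^ 2) / (m * (m - 1)) * (m⁻¹) ^ N)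
      |>.sub (tendsto_const_mul_inv_pow_atTop hm1 ((s - m ^ 2) / (m * (m - 1))))
    rw [sub_zero] at hlim
    refine hlim.congr' ?_
    filter_upwards [eventually_ge_atTop N] with n hn
    simp_rw [sub_sq_comm (gwNormalized ξ m N _), ← mul_sub]
    exact (integral_gwNormalized_sub_sq hmeas hindep hmean hbdd (by positivity) hsq hm1.ne'
      hn).symm

theorem tendsto_integral_sq_sub_of_tendsto :
    Tendsto (fun n => ∫ ω, (gwNormalized ξ m n ω - G ω) ^ 2 ∂P) atTop (𝓝 0) :=
  squeeze_zero (fun _ => integral_nonneg fun _ => sq_nonneg _)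
    (fun n => (integral_sq_sub_le_of_tendsto hmeas hindep hmean hbdd hm1 hsq hG n).2)
    (tendsto_const_mul_inv_pow_atTop hm1 _)

theorem integral_eq_one_of_tendsto : ∫ ω, G ω ∂P = 1 := by
  have hW := memLp_top_gwNormalized (P := P) hmeas hbdd m
  have hGm : AEStronglyMeasurable G P :=
    aestronglyMeasurable_of_tendsto_ae atTop (fun n => (hW n).1) hG
  have hbound : ∀ N, (∫ ω, G ω ∂P - 1) ^ 2 ≤ (s - m ^ 2) / (m * (m - 1)) * (m⁻¹) ^ N := by
    intro N
    obtain ⟨hint, hle⟩ := integral_sq_sub_le_of_tendsto hmeas hindep hmean hbdd hm1 hsq hG N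
    have hL2 : MemLp (fun ω => gwNormalized ξ m N ω - G ω) 2 P :=
      (memLp_two_iff_integrable_sq ((hW N).1.sub hGm)).2 hint
    have hGi : Integrable G P :=
      (((hW N).integrable le_top).sub (hL2.integrable one_le_two)).congr
        (ae_of_all _ fun ω => sub_sub_cancel _ _)
    calc (∫ ω, G ω ∂P - 1) ^ 2 = (∫ ω, (gwNormalized ξ m N ω - G ω) ∂P) ^ 2 := by
          rw [integral_sub ((hW N).integrable le_top) hGi, sub_sq_comm,
            integral_gwNormalized hmeas hindep hmean hbdd (by positivity)]
      _ ≤ ∫ ω, (gwNormalized ξ m N ω - G ω) ^ 2 ∂P := sq_integral_le_integral_sq hL2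
      _ ≤ _ := hle
  have hzero : (∫ ω, G ω ∂P - 1) ^ 2 ≤ 0 :=
    ge_of_tendsto' (tendsto_const_mul_inv_pow_atTop hm1 _) hbound
  exact sub_eq_zero.1 (pow_eq_zero_iff two_ne_zero |>.1 (le_antisymm hzero (sq_nonneg _)))

end Limit

end Moments

end Filtration

section Truncation

variable {μ : Measure ℕ} (hmeas : ∀ n i, Measurable (ξ n i))
  (hlaw : ∀ n i, P.map (ξ n i) = μ)
include hmeas hlaw

theorem integral_comp_offspring (g : ℕ → ℝ) (n i : ℕ) :
    ∫ ω, g (ξ n i ω) ∂P = ∫ k, g k ∂μ := by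
  rw [← hlaw n i, integral_map (hmeas n i).aemeasurable measurable_from_top.aestronglyMeasurable]

theorem ae_offspring_le {d : ℕ} (hsupp : ∀ k, d < k → μ {k} = 0) :
    ∀ᵐ ω ∂P, ∀ n i, ξ n i ω ≤ d := by
  have hle : ∀ᵐ k ∂μ, k ≤ d := ae_iff_of_countable.2 fun k hk => not_lt.1 fun h => hk (hsupp k h)
  exact ae_all_iff.2 fun n => ae_all_iff.2 fun i =>
    ae_of_ae_map (hmeas n i).aemeasurable ((hlaw n i).symm ▸ hle)

theorem integral_min_offspring [IsFiniteMeasure μ] {d : ℕ} (hsupp : ∀ k, d < k → μ {k} = 0)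
    {m : ℝ} (hmean : ∑' k : ℕ, (k : ℝ) * (μ {k}).toReal = m) (n i : ℕ) :
    ∫ ω, ((min (ξ n i ω) d : ℕ) : ℝ) ∂P = m := by
  have hmin : (fun k : ℕ => ((min k d : ℕ) : ℝ)) =ᵐ[μ] fun k => (k : ℝ) := by
    refine ae_iff_of_countable.2 fun k hk => ?_
    simp only [min_eq_left (not_lt.1 fun h => hk (hsupp k h))]
  have hint : Integrable (fun k : ℕ => (k : ℝ)) μ :=
    (Integrable.of_bound measurable_from_top.aestronglyMeasurable d
      (ae_of_all _ fun k => by simp [abs_of_nonneg])).congr hmin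
  rw [integral_comp_offspring hmeas hlaw (fun k => ((min k d : ℕ) : ℝ)), integral_congr_ae hmin,
    integral_countable hint, ← hmean]
  exact tsum_congr fun k => by simp [mul_comm, Measure.real]

end Truncation

end GaltonWatson

open GaltonWatson

theorem gw_martingale_convergence_general
    {Ω : Type*} [MeasurableSpace Ω] (P : MeasureTheory.Measure Ω)
    [MeasureTheory.IsProbabilityMeasure P]
    (d : ℕ) (m : ℝ) (hm : 1 < m)
    (μ : MeasureTheory.Measure ℕ) [MeasureTheory.IsProbabilityMeasure μ]
    (hsupp : ∀ k : ℕ, d < k → μ {k} = 0)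
    (hmean : ∑' k : ℕ, (k : ℝ) * (μ {k}).toReal = m)
    (ξ : ℕ → ℕ → Ω → ℕ)
    (hmeas : ∀ n i, Measurable (ξ n i))
    (hlaw : ∀ n i, MeasureTheory.Measure.map (ξ n i) P = μ)
    (hindep : ProbabilityTheory.iIndepFun
      (fun p : ℕ × ℕ => ξ p.1 p.2) P)
    (Z : ℕ → Ω → ℕ) (hZ0 : ∀ ω, Z 0 ω = 1)
    (hZsucc : ∀ n ω, Z (n + 1) ω = ∑ i ∈ Finset.range (Z n ω), ξ n i ω)
    (W : ℕ → Ω → ℝ) (hW : ∀ n ω, W n ω = (Z n ω : ℝ) / m ^ n)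
    (Winf : Ω → ℝ)
    (hWinf : ∀ ω, Winf ω = Filter.limsup (fun n => W n ω) Filter.atTop) :
    (∀ᵐ ω ∂P, Filter.Tendsto (fun n => W n ω) Filter.atTop (nhds (Winf ω))) ∧
    Filter.Tendsto (fun n => ∫ ω, (W n ω - Winf ω) ^ 2 ∂P) Filter.atTop (nhds 0) ∧
    (∀ᵐ ω ∂P, 0 ≤ Winf ω) ∧
    ∫ ω, Winf ω ∂P = 1 := by
  set ξ' : ℕ → ℕ → Ω → ℕ := fun n i ω => min (ξ n i ω) d
  have hmeas' : ∀ n i, Measurable (ξ' n i) := fun n i => (hmeas n i).min measurable_const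
  have hindep' : iIndepFun (fun p : ℕ × ℕ => ξ' p.1 p.2) P :=
    hindep.comp (fun _ k => min k d) fun _ => measurable_from_top
  have hbdd' : ∀ n i ω, ξ' n i ω ≤ d := fun n i ω => min_le_right _ _
  have hmean' := integral_min_offspring hmeas hlaw hsupp hmean
  have hsq' := integral_comp_offspring hmeas hlaw fun k => ((min k d : ℕ) : ℝ) ^ 2
  have hWW : ∀ᵐ ω ∂P, ∀ n, W n ω = gwNormalized ξ' m n ω := by
    filter_upwards [ae_offspring_le hmeas hlaw hsupp] with ω hω n
    rw [hW, eq_gwProcess hZ0 hZsucc, gwNormalized,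
      gwProcess_congr (ξ' := ξ') fun n i => (min_eq_left (hω n i)).symm]
  have hconv : ∀ᵐ ω ∂P, Tendsto (fun n => W n ω) atTop (𝓝 (Winf ω)) := by
    filter_upwards [ae_exists_tendsto_gwNormalized hmeas' hindep' hmean' hbdd' hm, hWW]
      with ω ⟨c, hc⟩ hω
    have hc' : Tendsto (fun n => W n ω) atTop (𝓝 c) := hc.congr fun n => (hω n).symm
    rwa [hWinf, hc'.limsup_eq]
  have hconv' : ∀ᵐ ω ∂P, Tendsto (fun n => gwNormalized ξ' m n ω) atTop (𝓝 (Winf ω)) := by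
    filter_upwards [hconv, hWW] with ω hc hω using hc.congr hω
  refine ⟨hconv, ?_, ?_, integral_eq_one_of_tendsto hmeas' hindep' hmean' hbdd' hm hsq' hconv'⟩
  · refine (tendsto_integral_sq_sub_of_tendsto hmeas' hindep' hmean' hbdd' hm hsq' hconv').congr
      fun n => integral_congr_ae ?_
    filter_upwards [hWW] with ω hω
    rw [hω n]
  · filter_upwards [hconv] with ω hω
    exact ge_of_tendsto' hω fun n => by rw [hW]; positivity

/-- The martingale (W_n) converges almost surely and in L² to the nonnegative random
variable W_∞ = limsup W_n, with E[W_∞] = 1. -/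
theorem gw_martingale_convergence
    {Ω : Type*} [MeasurableSpace Ω] (P : MeasureTheory.Measure Ω)
    [MeasureTheory.IsProbabilityMeasure P]
    (d : ℕ) (hd : 2 ≤ d) (m : ℝ) (hm : 1 < m)
    (μ : MeasureTheory.Measure ℕ) [MeasureTheory.IsProbabilityMeasure μ]
    (hsupp : ∀ k : ℕ, d < k → μ {k} = 0)
    (hmean : ∑' k : ℕ, (k : ℝ) * (μ {k}).toReal = m)
    (ξ : ℕ → ℕ → Ω → ℕ)
    (hmeas : ∀ n i, Measurable (ξ n i))
    (hlaw : ∀ n i, MeasureTheory.Measure.map (ξ n i) P = μ)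
    (hindep : ProbabilityTheory.iIndepFun
      (fun p : ℕ × ℕ => ξ p.1 p.2) P)
    (Z : ℕ → Ω → ℕ) (hZ0 : ∀ ω, Z 0 ω = 1)
    (hZsucc : ∀ n ω, Z (n + 1) ω = ∑ i ∈ Finset.range (Z n ω), ξ n i ω)
    (W : ℕ → Ω → ℝ) (hW : ∀ n ω, W n ω = (Z n ω : ℝ) / m ^ n)
    (Winf : Ω → ℝ)
    (hWinf : ∀ ω, Winf ω = Filter.limsup (fun n => W n ω) Filter.atTop) :
    (∀ᵐ ω ∂P, Filter.Tendsto (fun n => W n ω) Filter.atTop (nhds (Winf ω))) ∧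
    Filter.Tendsto (fun n => ∫ ω, (W n ω - Winf ω) ^ 2 ∂P) Filter.atTop (nhds 0) ∧
    (∀ᵐ ω ∂P, 0 ≤ Winf ω) ∧
    ∫ ω, Winf ω ∂P = 1 :=
  gw_martingale_convergence_general P d m hm μ hsupp hmean ξ hmeas hlaw hindep Z hZ0 hZsucc W hW
    Winf hWinf
end
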